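/- arXiv:2103.04538 — 11 statements merged into one kernel-verified Lean document; each statement's English description precedes it below -/
import Mathlib

section
/- Let X_KS be the 16×16 complex matrix with superdiagonal blocks x4 = [0 I], x3 = [[I,0],[0,0]], x2 = [[0,I],[0,0]], x1 = [I;0] (2×2 block notation, block sizes 2,4,4,4,2) and all other blocks zero. Then X_KS is nilpotent with rank X_KS = 8, rank X_KS² = 2, and X_KS³ = 0. Consequently the Jordan type of X_KS is the partition (3,3,2,2,2,2,1,1) of 16. -/
/-!
Over `ℂ` one has `rank (A * Aᴴ) = rank A`, and for `X = X_KS` both `X * Xᴴ` and `X² * (X²)ᴴ`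
are diagonal with entries in `{0, 1}`, with 8 and 2 ones respectively. Block multiplication gives
`x4 x3 = 0` and `x2 x1 = 0`, so the only nonzero block of `X²` is `x3 x2`, and `x3 x2 x1 = 0`
gives `X³ = 0`. The rank differences `16 - 8, 8 - 2, 2 - 0` are the numbers `8, 6, 2` of parts of
`(3,3,2,2,2,2,1,1)` that are at least `1, 2, 3`.
-/

open Matrix

noncomputable section

abbrev M2 := Matrix (Fin 2) (Fin 2) ℂ
abbrev F4 := Fin 2 ⊕ Fin 2
abbrev M4 := Matrix F4 F4 ℂ
abbrev M24 := Matrix (Fin 2) F4 ℂ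
abbrev M42 := Matrix F4 (Fin 2) ℂ
abbrev I16 := Fin 2 ⊕ (F4 ⊕ (F4 ⊕ (F4 ⊕ Fin 2)))

/-- The 16×16 block matrix with blocks x4, x3, x2, x1 on the superdiagonal
(block sizes 2,4,4,4,2). -/
def Xmat (x4 : M24) (x3 x2 : M4) (x1 : M42) : Matrix I16 I16 ℂ :=
  fromBlocks 0 (fromCols x4 0) 0
    (fromBlocks 0 (fromCols x3 0) 0
      (fromBlocks 0 (fromCols x2 0) 0
        (fromBlocks 0 x1 0 0)))

/-- The 16×16 block matrix with blocks y4, y3, y2, y1 on the subdiagonal. -/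
def Ymat (y1 : M24) (y2 y3 : M4) (y4 : M42) : Matrix I16 I16 ℂ :=
  fromBlocks 0 0 (fromRows y4 0)
    (fromBlocks 0 0 (fromRows y3 0)
      (fromBlocks 0 0 (fromRows y2 0)
        (fromBlocks 0 0 y1 0)))

/-- The 16×16 block diagonal matrix with diagonal blocks d1,…,d5. -/
def Dmat (d1 : M2) (d2 d3 d4 : M4) (d5 : M2) : Matrix I16 I16 ℂ :=
  fromBlocks d1 0 0
    (fromBlocks d2 0 0
      (fromBlocks d3 0 0
        (fromBlocks d4 0 0 d5)))

def x4KS : M24 := fromCols 0 1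
def x3KS : M4 := fromBlocks 1 0 0 0
def x2KS : M4 := fromBlocks 0 1 0 0
def x1KS : M42 := fromRows 1 0

def y1m (a : M2) : M24 := fromCols 0 a
def y2m (a b : M2) : M4 := fromBlocks a b 0 0
def y3m (c d : M2) : M4 := fromBlocks 0 c 0 d
def y4m (c : M2) : M42 := fromRows c 0

theorem Matrix.rank_eq_card_of_mul_conjTranspose_eq_diagonal {m n R : Type*} [Fintype m]
    [Fintype n] [DecidableEq m] [Field R] [PartialOrder R] [StarRing R] [StarOrderedRing R]
    [DecidableEq R] {A : Matrix m n R} {w : m → R} (h : A * Aᴴ = diagonal w) :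
    A.rank = Fintype.card {i // w i ≠ 0} := by
  rw [← rank_self_mul_conjTranspose, h, rank_diagonal]

theorem Matrix.rank_pow_eq_zero_of_pow_eq_zero {n R : Type*} [Fintype n] [DecidableEq n]
    [CommRing R] [Nontrivial R] {N : Matrix n n R} {m k : ℕ} (h : N ^ m = 0) (hk : m ≤ k) :
    (N ^ k).rank = 0 := by
  rw [← Nat.add_sub_cancel' hk, pow_add, h, zero_mul, rank_zero]

local notation "X_KS" => Xmat x4KS x3KS x2KS x1KS

theorem xKS_mul_conjTranspose :
    X_KS * X_KSᴴ = diagonal (Sum.elim 1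
      (Sum.elim (Sum.elim 1 0) (Sum.elim (Sum.elim 1 0) (Sum.elim (Sum.elim 1 0) 0)))) := by
  simp only [Xmat, x4KS, x3KS, x2KS, x1KS, fromBlocks_conjTranspose,
    conjTranspose_fromCols_eq_fromRows_conjTranspose,
    conjTranspose_fromRows_eq_fromCols_conjTranspose, conjTranspose_zero, conjTranspose_one,
    fromBlocks_multiply, fromCols_mul_fromRows, fromRows_mul_fromCols, fromBlocks_mul_fromRows,
    fromCols_mul_fromBlocks, Matrix.mul_zero, Matrix.zero_mul, Matrix.mul_one, add_zero,
    zero_add, fromCols_zero, fromRows_zero, ← fromBlocks_diagonal, Pi.one_def, Pi.zero_def,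
    diagonal_one, diagonal_zero]

theorem xKS_sq :
    X_KS ^ 2 =
      fromBlocks 0 0 0 (fromBlocks 0 (fromCols 0 (fromCols (fromBlocks 0 1 0 0) 0)) 0 0) := by
  simp only [sq, Xmat, x4KS, x3KS, x2KS, x1KS, fromBlocks_multiply, fromBlocks_mul_fromRows,
    fromCols_mul_fromBlocks, mul_fromCols, Matrix.mul_zero, Matrix.zero_mul, Matrix.mul_one,
    add_zero, zero_add, fromCols_zero, fromRows_zero, fromBlocks_zero]

theorem xKS_pow_three : X_KS ^ 3 = 0 := by
  rw [pow_succ, xKS_sq]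
  simp only [Xmat, x1KS, fromBlocks_multiply, fromBlocks_mul_fromRows, fromCols_mul_fromBlocks,
    Matrix.mul_zero, Matrix.zero_mul, Matrix.mul_one, add_zero, fromCols_zero, fromRows_zero,
    fromBlocks_zero]

theorem xKS_sq_mul_conjTranspose :
    X_KS ^ 2 * (X_KS ^ 2)ᴴ = diagonal (Sum.elim 0 (Sum.elim (Sum.elim 1 0) 0)) := by
  simp only [xKS_sq, fromBlocks_conjTranspose, conjTranspose_fromCols_eq_fromRows_conjTranspose,
    conjTranspose_zero, conjTranspose_one, fromBlocks_multiply, fromCols_mul_fromRows,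
    Matrix.mul_zero, Matrix.zero_mul, Matrix.mul_one, add_zero, zero_add,
    ← fromBlocks_diagonal, Pi.one_def, Pi.zero_def, diagonal_one, diagonal_zero]

open scoped ComplexOrder in
theorem rank_xKS : (X_KS).rank = 8 := by
  rw [rank_eq_card_of_mul_conjTranspose_eq_diagonal xKS_mul_conjTranspose]
  simp [Fintype.card_subtype, Finset.card_filter, Fintype.sum_sum_type]

open scoped ComplexOrder in
theorem rank_xKS_sq : (X_KS ^ 2).rank = 2 := by
  rw [rank_eq_card_of_mul_conjTranspose_eq_diagonal xKS_sq_mul_conjTranspose]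
  simp [Fintype.card_subtype, Finset.card_filter, Fintype.sum_sum_type]

theorem stmt_2 :
    IsNilpotent (Xmat x4KS x3KS x2KS x1KS) ∧
    (Xmat x4KS x3KS x2KS x1KS).rank = 8 ∧
    ((Xmat x4KS x3KS x2KS x1KS) ^ 2).rank = 2 ∧
    (Xmat x4KS x3KS x2KS x1KS) ^ 3 = 0 ∧
    -- the Jordan type is (3,3,2,2,2,2,1,1): for every k ≥ 1 the number of Jordan
    -- blocks of size ≥ k, namely rank X^(k-1) − rank X^k, equals the number of
    -- parts of the partition that are ≥ k
    (∀ k : ℕ, 1 ≤ k →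
      ((Xmat x4KS x3KS x2KS x1KS) ^ (k - 1)).rank -
          ((Xmat x4KS x3KS x2KS x1KS) ^ k).rank =
        (({3, 3, 2, 2, 2, 2, 1, 1} : Multiset ℕ).filter fun m => k ≤ m).card) := by
  refine ⟨⟨3, xKS_pow_three⟩, rank_xKS, rank_xKS_sq, xKS_pow_three, fun k hk => ?_⟩
  obtain rfl | rfl | rfl | hk : k = 1 ∨ k = 2 ∨ k = 3 ∨ 4 ≤ k := by omega
  · rw [Nat.sub_self, pow_zero, pow_one, rank_one, rank_xKS]
    decide
  · rw [Nat.add_one_sub_one, pow_one, rank_xKS, rank_xKS_sq]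
    decide
  · rw [Nat.add_one_sub_one, xKS_pow_three, rank_xKS_sq, rank_zero]
    decide
  · rw [rank_pow_eq_zero_of_pow_eq_zero xKS_pow_three (by omega : 3 ≤ k - 1),
      rank_pow_eq_zero_of_pow_eq_zero xKS_pow_three (by omega : 3 ≤ k), Nat.sub_self, eq_comm,
      Multiset.card_eq_zero, Multiset.filter_eq_nil]
    simp only [Multiset.insert_eq_cons, Multiset.mem_cons, Multiset.mem_singleton]
    omega
end
end

section
/- Let x_KS = (x4,x3,x2,x1) with x4 = [0 I], x3 = [[I,0],[0,0]], x2 = [[0,I],[0,0]], x1 = [I;0] (2×2 block notation, I the 2×2 identity). A tuple y = (y1,y2,y3,y4) with y1 ∈ Mat(2×4,ℂ), y2, y3 ∈ Mat(4×4,ℂ), y4 ∈ Mat(4×2,ℂ) satisfies the five relations x4y4 = 0, x3y3 = y4x4, x2y2 = y3x3, x1y1 = y2x2, y1x1 = 0 if and only if there exist matrices a, b, c, d ∈ Mat(2×2,ℂ) such that y1 = [0 a], y2 = [[a,b],[0,0]], y3 = [[0,c],[0,d]], y4 = [c;0]. In particular, the solution space is a 16-dimensional complex vector space. -/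
open Matrix

noncomputable section

/-!
Split every `yᵢ` into 2×2 blocks. Multiplying by the blocks of `x_KS` (which are `0` and `1`)
only selects or moves blocks, so the five relations become equalities of 2×2 blocks: they kill
the blocks outside the claimed shape and identify the `a` of `y1` with that of `y2`, and the `c`
of `y3` with that of `y4`. The solutions are therefore the image of the injective linear map
`(a, b, c, d) ↦ y`, whose domain `M2⁴` has dimension `4 · 4 = 16`.
-/

theorem ks_relations_iff (y1 : M24) (y2 y3 : M4) (y4 : M42) :
    (x4KS * y4 = 0 ∧ x3KS * y3 = y4 * x4KS ∧ x2KS * y2 = y3 * x3KS ∧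
        x1KS * y1 = y2 * x2KS ∧ y1 * x1KS = 0) ↔
      ∃ a b c d : M2, y1 = y1m a ∧ y2 = y2m a b ∧ y3 = y3m c d ∧ y4 = y4m c := by
  obtain ⟨p, q, rfl⟩ : ∃ p q, y1 = fromCols p q := ⟨_, _, (fromCols_toCols y1).symm⟩
  obtain ⟨e, f, g, h, rfl⟩ : ∃ e f g h, y2 = fromBlocks e f g h :=
    ⟨_, _, _, _, (fromBlocks_toBlocks y2).symm⟩
  obtain ⟨i, j, k, l, rfl⟩ : ∃ i j k l, y3 = fromBlocks i j k l :=
    ⟨_, _, _, _, (fromBlocks_toBlocks y3).symm⟩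
  obtain ⟨u, v, rfl⟩ : ∃ u v, y4 = fromRows u v := ⟨_, _, (fromRows_toRows y4).symm⟩
  simp only [x1KS, x2KS, x3KS, x4KS, y1m, y2m, y3m, y4m, fromCols_mul_fromRows,
    fromBlocks_multiply, fromRows_mul_fromCols, Matrix.zero_mul, Matrix.mul_zero,
    Matrix.one_mul, Matrix.mul_one, add_zero, zero_add, fromBlocks_inj,
    fromCols_inj.eq_iff, fromRows_inj.eq_iff]
  constructor
  · rintro ⟨hv, ⟨hi, hj, -, -⟩, ⟨-, hh, hk, -⟩, ⟨hp, hq, -, hg⟩, -⟩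
    exact ⟨e, f, u, l, ⟨hp, hq⟩, ⟨rfl, rfl, hg.symm, hh⟩, ⟨hi, hj, hk.symm, rfl⟩, rfl, hv⟩
  · rintro ⟨a, b, c, d, ⟨rfl, rfl⟩, ⟨rfl, rfl, rfl, rfl⟩, ⟨rfl, rfl, rfl, rfl⟩, rfl, rfl⟩
    simp

def ksParam : (M2 × M2 × M2 × M2) →ₗ[ℂ] (M24 × M4 × M4 × M42) where
  toFun x := (y1m x.1, y2m x.1 x.2.1, y3m x.2.2.1 x.2.2.2, y4m x.2.2.1)
  map_add' x y := by
    ext (i | i) (j | j) <;> simp [y1m, y2m, y3m, y4m]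
  map_smul' r x := by
    ext (i | i) (j | j) <;> simp [y1m, y2m, y3m, y4m]

theorem ksParam_injective : Function.Injective ksParam := by
  refine Function.LeftInverse.injective
    (g := fun y => (y.1.toCols₂, y.2.1.toBlocks₁₂, y.2.2.2.toRows₁, y.2.2.1.toBlocks₂₂)) ?_
  rintro ⟨a, b, c, d⟩
  rfl

def ksSolutions : Submodule ℂ (M24 × M4 × M4 × M42) := LinearMap.range ksParam

theorem coe_ksSolutions :
    (ksSolutions : Set (M24 × M4 × M4 × M42)) =
      {y : M24 × M4 × M4 × M42 | x4KS * y.2.2.2 = 0 ∧ x3KS * y.2.2.1 = y.2.2.2 * x4KS ∧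
        x2KS * y.2.1 = y.2.2.1 * x3KS ∧ x1KS * y.1 = y.2.1 * x2KS ∧ y.1 * x1KS = 0} := by
  ext ⟨y1, y2, y3, y4⟩
  simp only [ksSolutions, SetLike.mem_coe, LinearMap.mem_range, Set.mem_ofPred_eq,
    ks_relations_iff]
  constructor
  · rintro ⟨⟨a, b, c, d⟩, hy⟩
    simp only [ksParam, LinearMap.coe_mk, AddHom.coe_mk, Prod.mk.injEq] at hy
    obtain ⟨rfl, rfl, rfl, rfl⟩ := hy
    exact ⟨a, b, c, d, rfl, rfl, rfl, rfl⟩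
  · rintro ⟨a, b, c, d, rfl, rfl, rfl, rfl⟩
    exact ⟨(a, b, c, d), rfl⟩

theorem finrank_ksSolutions : Module.finrank ℂ ksSolutions = 16 := by
  rw [ksSolutions, LinearMap.finrank_range_of_inj ksParam_injective]
  simp [Module.finrank_prod, Module.finrank_matrix]

theorem stmt_4 :
    (∀ (y1 : M24) (y2 y3 : M4) (y4 : M42),
      (x4KS * y4 = 0 ∧ x3KS * y3 = y4 * x4KS ∧ x2KS * y2 = y3 * x3KS ∧
          x1KS * y1 = y2 * x2KS ∧ y1 * x1KS = 0) ↔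
        ∃ a b c d : M2, y1 = y1m a ∧ y2 = y2m a b ∧ y3 = y3m c d ∧ y4 = y4m c) ∧
    -- the solution space is a 16-dimensional complex vector space
    ∃ S : Submodule ℂ (M24 × M4 × M4 × M42),
      (S : Set (M24 × M4 × M4 × M42)) =
        {y : M24 × M4 × M4 × M42 |
          x4KS * y.2.2.2 = 0 ∧ x3KS * y.2.2.1 = y.2.2.2 * x4KS ∧
          x2KS * y.2.1 = y.2.2.1 * x3KS ∧ x1KS * y.1 = y.2.1 * x2KS ∧
          y.1 * x1KS = 0} ∧
      Module.finrank ℂ S = 16 :=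
  ⟨ks_relations_iff, ksSolutions, coe_ksSolutions, finrank_ksSolutions⟩
end
end

section
/- Let x_KS = (x4,x3,x2,x1) with x4 = [0 I], x3 = [[I,0],[0,0]], x2 = [[0,I],[0,0]], x1 = [I;0]. An element h = (h4,h3,h2,h1,h0) ∈ GL2(ℂ) × GL4(ℂ) × GL4(ℂ) × GL4(ℂ) × GL2(ℂ) satisfies h4·x4 = x4·h3, h3·x3 = x3·h2, h2·x2 = x2·h1, h1·x1 = x1·h0 if and only if there exist k1, k2 ∈ GL2(ℂ) and u, v ∈ Mat(2×2,ℂ) such that h1 = [[h0,u],[0,k1]], h2 = [[k1,0],[0,k2]], h3 = [[k1,v],[0,h4]]. Consequently the stabilizer Z_H(x_KS) of x_KS in H is an algebraic group of dimension 24, and the H-orbit of x_KS has dimension 56 − 24 = 32. -/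
open Matrix

noncomputable section

/-- The stabilizer of x_KS in H = GL2 × GL4 × GL4 × GL4 × GL2, as the set of
tuples (h4,h3,h2,h1,h0) of invertible matrices intertwining x_KS. -/
def StabXKS : Type :=
  {p : M2 × M4 × M4 × M4 × M2 //
    IsUnit p.1 ∧ IsUnit p.2.1 ∧ IsUnit p.2.2.1 ∧ IsUnit p.2.2.2.1 ∧
      IsUnit p.2.2.2.2 ∧
    p.1 * x4KS = x4KS * p.2.1 ∧ p.2.1 * x3KS = x3KS * p.2.2.1 ∧
    p.2.2.1 * x2KS = x2KS * p.2.2.2.1 ∧ p.2.2.2.1 * x1KS = x1KS * p.2.2.2.2}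

/-!
In 2×2 block form the four equations `h·x_KS = x_KS·h` are block identities that force
`h1 = [[h0, u], [0, k1]]`, `h2 = [[k1, 0], [0, k2]]`, `h3 = [[k1, v], [0, h4]]`, and `h2` is
invertible exactly when `k1` and `k2` are. So the stabilizer is parametrised by
`(h4, h0, k1, k2, u, v) ∈ GL₂⁴ × Mat₂²`. The equations are linear in `h`, so the same
parametrisation identifies the kernel of the infinitesimal action with `Mat₂⁶`, of dimension 24,
and rank–nullity gives rank `56 - 24 = 32`.
-/

def IntertwinesXKS (q : M2 × M4 × M4 × M4 × M2) : Prop :=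
  q.1 * x4KS = x4KS * q.2.1 ∧ q.2.1 * x3KS = x3KS * q.2.2.1 ∧
    q.2.2.1 * x2KS = x2KS * q.2.2.2.1 ∧ q.2.2.2.1 * x1KS = x1KS * q.2.2.2.2

/-- `(h4, h0, k1, k2, u, v) ↦ (h4, [[k1, v], [0, h4]], [[k1, 0], [0, k2]], [[h0, u], [0, k1]], h0)`
-/
def stabParam : (M2 × M2 × M2 × M2 × M2 × M2) →ₗ[ℂ] (M2 × M4 × M4 × M4 × M2) where
  toFun t := (t.1, fromBlocks t.2.2.1 t.2.2.2.2.2 0 t.1, fromBlocks t.2.2.1 0 0 t.2.2.2.1,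
    fromBlocks t.2.1 t.2.2.2.2.1 0 t.2.2.1, t.2.1)
  map_add' _ _ := by simp [fromBlocks_add]
  map_smul' _ _ := by simp [fromBlocks_smul]

def stabCoords (q : M2 × M4 × M4 × M4 × M2) : M2 × M2 × M2 × M2 × M2 × M2 :=
  (q.1, q.2.2.2.2, q.2.2.1.toBlocks₁₁, q.2.2.1.toBlocks₂₂, q.2.2.2.1.toBlocks₁₂,
    q.2.1.toBlocks₁₂)

@[simp]
lemma stabCoords_stabParam (t : M2 × M2 × M2 × M2 × M2 × M2) : stabCoords (stabParam t) = t := by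
  simp [stabCoords, stabParam]

lemma stabParam_injective : Function.Injective stabParam :=
  Function.LeftInverse.injective stabCoords_stabParam

lemma intertwinesXKS_iff (q : M2 × M4 × M4 × M4 × M2) :
    IntertwinesXKS q ↔ stabParam (stabCoords q) = q := by
  obtain ⟨h4, h3, h2, h1, h0⟩ := q
  rw [← fromBlocks_toBlocks h3, ← fromBlocks_toBlocks h2, ← fromBlocks_toBlocks h1]
  simp only [IntertwinesXKS, stabParam, stabCoords, x4KS, x3KS, x2KS, x1KS, LinearMap.coe_mk,
    AddHom.coe_mk, mul_fromCols, fromCols_mul_fromBlocks, fromBlocks_multiply, fromBlocks_mul_fromRows, fromRows_mul, fromCols_ext_iff,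
    fromRows_ext_iff, fromBlocks_inj, toBlocks_fromBlocks₁₁, toBlocks_fromBlocks₁₂,
    toBlocks_fromBlocks₂₂, Matrix.mul_zero, Matrix.zero_mul, Matrix.mul_one, Matrix.one_mul,
    add_zero, zero_add, Prod.mk.injEq]
  tauto

lemma intertwinesXKS_stabParam (t : M2 × M2 × M2 × M2 × M2 × M2) :
    IntertwinesXKS (stabParam t) := by
  rw [intertwinesXKS_iff, stabCoords_stabParam]

lemma intertwinesXKS_iff_blocks (h4 h0 : M2) (h3 h2 h1 : M4) :
    IntertwinesXKS (h4, h3, h2, h1, h0) ↔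
      h3 = fromBlocks h2.toBlocks₁₁ h3.toBlocks₁₂ 0 h4 ∧
        h2 = fromBlocks h2.toBlocks₁₁ 0 0 h2.toBlocks₂₂ ∧
        h1 = fromBlocks h0 h1.toBlocks₁₂ 0 h2.toBlocks₁₁ := by
  rw [intertwinesXKS_iff]
  simp only [stabParam, stabCoords, LinearMap.coe_mk, AddHom.coe_mk, Prod.mk.injEq, true_and,
    and_true, eq_comm]

lemma intertwinesXKS_iff_exists (h4 h0 : M2) (h3 h2 h1 : M4) (u2 : IsUnit h2) :
    IntertwinesXKS (h4, h3, h2, h1, h0) ↔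
      ∃ k1 k2 u v : M2, IsUnit k1 ∧ IsUnit k2 ∧
        h1 = fromBlocks h0 u 0 k1 ∧ h2 = fromBlocks k1 0 0 k2 ∧ h3 = fromBlocks k1 v 0 h4 := by
  constructor
  · intro h
    obtain ⟨h3_eq, h2_eq, h1_eq⟩ := (intertwinesXKS_iff_blocks _ _ _ _ _).1 h
    rw [h2_eq, isUnit_fromBlocks_zero₂₁] at u2
    exact ⟨_, _, _, _, u2.1, u2.2, h1_eq, h2_eq, h3_eq⟩
  · rintro ⟨k1, k2, u, v, -, -, rfl, rfl, rfl⟩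
    exact intertwinesXKS_stabParam (h4, h0, k1, k2, u, v)

lemma isUnit_stabCoords (p : StabXKS) :
    IsUnit (stabCoords p.1).1 ∧ IsUnit (stabCoords p.1).2.1 ∧ IsUnit (stabCoords p.1).2.2.1 ∧
      IsUnit (stabCoords p.1).2.2.2.1 := by
  obtain ⟨⟨h4, h3, h2, h1, h0⟩, u4, -, u2, -, u0, h⟩ := p
  have h2_eq := ((intertwinesXKS_iff_blocks _ _ _ _ _).1 h).2.1
  rw [h2_eq, isUnit_fromBlocks_zero₂₁] at u2
  exact ⟨u4, u0, u2⟩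

def stabXKSEquiv : StabXKS ≃ M2ˣ × M2ˣ × M2ˣ × M2ˣ × M2 × M2 where
  toFun p :=
    have hu := isUnit_stabCoords p
    (hu.1.unit, hu.2.1.unit, hu.2.2.1.unit, hu.2.2.2.unit, (stabCoords p.1).2.2.2.2)
  invFun t := ⟨stabParam (t.1, t.2.1, t.2.2.1, t.2.2.2.1, t.2.2.2.2), by
    refine ⟨t.1.isUnit, ?_, ?_, ?_, t.2.1.isUnit, intertwinesXKS_stabParam _⟩ <;>
      exact isUnit_fromBlocks_zero₂₁.2 ⟨Units.isUnit _, Units.isUnit _⟩⟩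
  left_inv p := Subtype.ext ((intertwinesXKS_iff p.1).1 p.2.2.2.2.2.2)
  right_inv t := by ext <;> simp [stabCoords, stabParam]

def actionDeriv : (M2 × M4 × M4 × M4 × M2) →ₗ[ℂ] (M24 × M4 × M4 × M42) where
  toFun q := (q.1 * x4KS - x4KS * q.2.1, q.2.1 * x3KS - x3KS * q.2.2.1,
    q.2.2.1 * x2KS - x2KS * q.2.2.2.1, q.2.2.2.1 * x1KS - x1KS * q.2.2.2.2)
  map_add' _ _ := by simp only [Prod.fst_add, Prod.snd_add, Matrix.add_mul, Matrix.mul_add,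
    add_sub_add_comm, Prod.mk_add_mk]
  map_smul' _ _ := by simp [smul_sub]

lemma ker_actionDeriv : LinearMap.ker actionDeriv = LinearMap.range stabParam := by
  ext q
  have : actionDeriv q = 0 ↔ IntertwinesXKS q := by
    simp [actionDeriv, IntertwinesXKS, sub_eq_zero]
  rw [LinearMap.mem_ker, this, intertwinesXKS_iff]
  exact ⟨fun h ↦ ⟨_, h⟩, fun ⟨t, ht⟩ ↦ ht ▸ congrArg stabParam (stabCoords_stabParam t)⟩

lemma finrank_range_actionDeriv : Module.finrank ℂ (LinearMap.range actionDeriv) = 32 := by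
  have h := LinearMap.finrank_range_add_finrank_ker actionDeriv
  rw [ker_actionDeriv, LinearMap.finrank_range_of_inj stabParam_injective] at h
  simp only [Module.finrank_prod, Module.finrank_matrix, Fintype.card_sum, Fintype.card_fin,
    Module.finrank_self] at h
  omega

theorem stmt_6 :
    (∀ (h4 h0 : M2) (h3 h2 h1 : M4), IsUnit h4 → IsUnit h3 → IsUnit h2 →
      IsUnit h1 → IsUnit h0 →
      ((h4 * x4KS = x4KS * h3 ∧ h3 * x3KS = x3KS * h2 ∧ h2 * x2KS = x2KS * h1 ∧
          h1 * x1KS = x1KS * h0) ↔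
        ∃ k1 k2 u v : M2, IsUnit k1 ∧ IsUnit k2 ∧
          h1 = fromBlocks h0 u 0 k1 ∧ h2 = fromBlocks k1 0 0 k2 ∧
          h3 = fromBlocks k1 v 0 h4)) ∧
    -- Z_H(x_KS) has dimension 24: it is isomorphic (as a variety) to
    -- GL2(ℂ)⁴ × Mat₂(ℂ)²
    Nonempty (StabXKS ≃ M2ˣ × M2ˣ × M2ˣ × M2ˣ × M2 × M2) ∧
    -- the H-orbit of x_KS has dimension 56 − 24 = 32: the rank of the
    -- infinitesimal action map Lie(H) → V at x_KS is 32
    Module.finrank ℂ (Submodule.span ℂ (Set.range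
      fun q : M2 × M4 × M4 × M4 × M2 =>
        ((q.1 * x4KS - x4KS * q.2.1, q.2.1 * x3KS - x3KS * q.2.2.1,
          q.2.2.1 * x2KS - x2KS * q.2.2.2.1,
          q.2.2.2.1 * x1KS - x1KS * q.2.2.2.2) : M24 × M4 × M4 × M42))) = 32 := by
  refine ⟨fun h4 h0 h3 h2 h1 _ _ u2 _ _ ↦ intertwinesXKS_iff_exists h4 h0 h3 h2 h1 u2,
    ⟨stabXKSEquiv⟩, ?_⟩
  rw [← finrank_range_actionDeriv, ← Submodule.span_eq (LinearMap.range actionDeriv),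
    LinearMap.coe_range]
  rfl
end
end

section
/- With notation as above, suppose a, c, a', c' ∈ GL2(ℂ) and b, d, b', d' ∈ Mat(2×2,ℂ), and suppose there is h ∈ Z_H(x_KS) with h · y_KS(a,b,c,d) = y_KS(a',b',c',d'). Then the 2×2 matrices (ac)⁻¹(bd) and (a'c')⁻¹(b'd') are conjugate in GL2(ℂ); in particular they have the same characteristic polynomial. -/
open Matrix

noncomputable section

/-!
The stabilizer acts on the products by `a * c ↦ h0 * (a * c) * h4⁻¹` and
`b * d ↦ h0 * (b * d) * h4⁻¹`, the `k₁, k₂` cancelling in the middle; hence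
`(a * c)⁻¹ * (b * d)` is conjugated by `h4`.
-/

namespace Matrix

variable {n R : Type*} [Fintype n] [DecidableEq n] [CommRing R]

theorem mul_nonsing_inv_mul_mul_of_isUnit {k : Matrix n n R} (hk : IsUnit k)
    (p A C q : Matrix n n R) : p * A * k⁻¹ * (k * C * q) = p * (A * C) * q := by
  simp only [mul_assoc, nonsing_inv_mul_cancel_left _ _ ((isUnit_iff_isUnit_det k).mp hk)]

theorem nonsing_inv_mul_mul_eq_conj_of_isUnit {p q : Matrix n n R} (hp : IsUnit p)
    (hq : IsUnit q) (X Y : Matrix n n R) :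
    (p * X * q⁻¹)⁻¹ * (p * Y * q⁻¹) = q * (X⁻¹ * Y) * q⁻¹ := by
  simp only [mul_inv_rev, nonsing_inv_nonsing_inv q ((isUnit_iff_isUnit_det q).mp hq), mul_assoc,
    nonsing_inv_mul_cancel_left _ _ ((isUnit_iff_isUnit_det p).mp hp)]

theorem charpoly_conj_of_isUnit {g : Matrix n n R} (hg : IsUnit g) (M : Matrix n n R) :
    (g * M * g⁻¹).charpoly = M.charpoly := by
  obtain ⟨u, rfl⟩ := hg
  exact charpoly_units_conj u M

end Matrix

theorem y2m_inj {a b a' b' : M2} : y2m a b = y2m a' b' ↔ a = a' ∧ b = b' := by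
  simp [y2m, fromBlocks_inj]

theorem y3m_inj {c d c' d' : M2} : y3m c d = y3m c' d' ↔ c = c' ∧ d = d' := by
  simp [y3m, fromBlocks_inj]

theorem stmt_8_general (a b c d a' b' c' d' : M2)
    (h : ∃ h0 h4 k1 k2 : M2, IsUnit h0 ∧ IsUnit h4 ∧ IsUnit k1 ∧ IsUnit k2 ∧
      (y1m (h0 * a * k1⁻¹), y2m (h0 * a * k1⁻¹) (h0 * b * k2⁻¹),
       y3m (k1 * c * h4⁻¹) (k2 * d * h4⁻¹), y4m (k1 * c * h4⁻¹)) =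
      (y1m a', y2m a' b', y3m c' d', y4m c')) :
    (∃ g : M2, IsUnit g ∧
      (a' * c')⁻¹ * (b' * d') = g * ((a * c)⁻¹ * (b * d)) * g⁻¹) ∧
    ((a * c)⁻¹ * (b * d)).charpoly = ((a' * c')⁻¹ * (b' * d')).charpoly := by
  obtain ⟨h0, h4, k1, k2, hu0, hu4, hu1, hu2, heq⟩ := h
  simp only [Prod.mk.injEq] at heq
  obtain ⟨-, hab, hcd, -⟩ := heq
  obtain ⟨rfl, rfl⟩ := y2m_inj.mp hab
  obtain ⟨rfl, rfl⟩ := y3m_inj.mp hcd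
  have hconj : (h0 * a * k1⁻¹ * (k1 * c * h4⁻¹))⁻¹ * (h0 * b * k2⁻¹ * (k2 * d * h4⁻¹)) =
      h4 * ((a * c)⁻¹ * (b * d)) * h4⁻¹ := by
    rw [Matrix.mul_nonsing_inv_mul_mul_of_isUnit hu1, Matrix.mul_nonsing_inv_mul_mul_of_isUnit hu2,
      Matrix.nonsing_inv_mul_mul_eq_conj_of_isUnit hu0 hu4]
  exact ⟨⟨h4, hu4, hconj⟩, by rw [hconj, Matrix.charpoly_conj_of_isUnit hu4]⟩

theorem stmt_8 (a b c d a' b' c' d' : M2)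
    (ha : IsUnit a) (hc : IsUnit c) (ha' : IsUnit a') (hc' : IsUnit c')
    (h : ∃ h0 h4 k1 k2 : M2, IsUnit h0 ∧ IsUnit h4 ∧ IsUnit k1 ∧ IsUnit k2 ∧
      (y1m (h0 * a * k1⁻¹), y2m (h0 * a * k1⁻¹) (h0 * b * k2⁻¹),
       y3m (k1 * c * h4⁻¹) (k2 * d * h4⁻¹), y4m (k1 * c * h4⁻¹)) =
      (y1m a', y2m a' b', y3m c' d', y4m c')) :
    (∃ g : M2, IsUnit g ∧
      (a' * c')⁻¹ * (b' * d') = g * ((a * c)⁻¹ * (b * d)) * g⁻¹) ∧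
    ((a * c)⁻¹ * (b * d)).charpoly = ((a' * c')⁻¹ * (b' * d')).charpoly :=
  stmt_8_general a b c d a' b' c' d' h
end
end

section
/- Let a, c ∈ GL2(ℂ) and b = d = 0. Then the stabilizer of (x_KS, y_KS(a,0,c,0)) in H, i.e. the subgroup of Z_H(x_KS) fixing y_KS(a,0,c,0) under the action h·y_KS(a,b,c,d) = y_KS(h0ak1⁻¹, h0bk2⁻¹, k1ch4⁻¹, k2dh4⁻¹), consists exactly of those h = (h4, k1, k2, h0, u, v) with h0 = (ac)h4(ac)⁻¹, k1 = c h4 c⁻¹, and h4 ∈ GL2(ℂ), k2 ∈ GL2(ℂ), u, v ∈ Mat(2×2,ℂ) arbitrary; it is an irreducible algebraic group of dimension 16. -/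
open Matrix

noncomputable section

/-- The stabilizer of y_KS(a,0,c,0) inside Z_H(x_KS), in the parametrization
(h4, k1, k2, h0, u, v) of Z_H(x_KS); the conditions are that the action
h·y_KS(a,b,c,d) = y_KS(h0ak1⁻¹, h0bk2⁻¹, k1ch4⁻¹, k2dh4⁻¹) fixes y_KS(a,0,c,0). -/
def stab9 (a c : M2) : Set (M2 × M2 × M2 × M2 × M2 × M2) :=
  {p | IsUnit p.1 ∧ IsUnit p.2.1 ∧ IsUnit p.2.2.1 ∧ IsUnit p.2.2.2.1 ∧
    p.2.2.2.1 * a * p.2.1⁻¹ = a ∧ p.2.2.2.1 * 0 * p.2.2.1⁻¹ = (0 : M2) ∧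
    p.2.1 * c * p.1⁻¹ = c ∧ p.2.2.1 * 0 * p.1⁻¹ = (0 : M2)}

/-!
The two fixed-point equations `h0 a k1⁻¹ = a` and `k1 c h4⁻¹ = c` say that `k1` and `h0` are the
conjugates `c h4 c⁻¹` and `(a c) h4 (a c)⁻¹`, so the stabilizer is the graph of a continuous map
on `GL₂(ℂ) × GL₂(ℂ) × M₂(ℂ) × M₂(ℂ)` with coordinates `(h4, k2, u, v)`. That product is connected
because `GLₙ(ℂ)` is: a complex line through `1` and `A` meets the singular matrices in the
finitely many roots of its determinant polynomial.
-/

open Polynomial in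
theorem Matrix.eval_det_one_add_X_smul {n R : Type*} [Fintype n] [DecidableEq n] [CommRing R]
    (B : Matrix n n R) (z : R) :
    ((1 + (X : R[X]) • B.map C).det).eval z = (1 + z • B).det := by
  rw [← coe_evalRingHom, RingHom.map_det]
  congr 1
  ext i j
  simp only [RingHom.mapMatrix_apply, coe_evalRingHom, map_apply, add_apply, one_apply,
    smul_apply, smul_eq_mul, X_mul_C, eval_add, apply_ite, eval_one, eval_zero, eval_mul, eval_C,
    eval_X, add_right_inj]
  ring

open Polynomial in
theorem Matrix.isPathConnected_setOf_isUnit {n : Type*} [Fintype n] [DecidableEq n] :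
    IsPathConnected {A : Matrix n n ℂ | IsUnit A} := by
  refine ⟨1, isUnit_one, fun {A} hA => ?_⟩
  set p : ℂ[X] := (1 + (X : ℂ[X]) • (A - 1).map C).det
  have hp : ∀ z : ℂ, p.eval z = (1 + z • (A - 1)).det := eval_det_one_add_X_smul _
  have hp1 : p.eval 1 ≠ 0 := by
    simpa [hp] using ((isUnit_iff_isUnit_det A).mp hA).ne_zero
  have hp0 : p ≠ 0 := by rintro h; simp [h] at hp1
  have hcompl : IsPathConnected {z : ℂ | p.IsRoot z}ᶜ :=
    (finite_setOfPred_isRoot hp0).countable.isPathConnected_compl_of_one_lt_rank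
      (by simp [Complex.rank_real_complex])
  have hjoin : JoinedIn {z : ℂ | p.IsRoot z}ᶜ 0 1 :=
    hcompl.joinedIn 0 (by simp [IsRoot, hp]) 1 hp1
  have hmaps : Set.MapsTo (fun z : ℂ => 1 + z • (A - 1)) {z | p.IsRoot z}ᶜ {A | IsUnit A} :=
    fun z hz => (isUnit_iff_isUnit_det _).mpr <| isUnit_iff_ne_zero.mpr <| by
      simpa [IsRoot, hp] using hz
  simpa using (hjoin.map (f := fun z : ℂ => 1 + z • (A - 1)) (by fun_prop)).mono
    hmaps.image_subset

theorem Matrix.mul_mul_nonsing_inv_eq_iff {n R : Type*} [Fintype n] [DecidableEq n] [CommRing R]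
    {a h k : Matrix n n R} (ha : IsUnit a) (hk : IsUnit k) :
    h * a * k⁻¹ = a ↔ h = a * k * a⁻¹ := by
  have ha' := (isUnit_iff_isUnit_det a).mp ha
  have hk' := (isUnit_iff_isUnit_det k).mp hk
  constructor
  · intro e
    calc h = h * a * k⁻¹ * k * a⁻¹ := by
          rw [nonsing_inv_mul_cancel_right _ _ hk', mul_nonsing_inv_cancel_right _ _ ha']
      _ = a * k * a⁻¹ := by rw [e]
  · rintro rfl
    rw [nonsing_inv_mul_cancel_right _ _ ha', mul_nonsing_inv_cancel_right _ _ hk']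

theorem Matrix.isUnit_conj {n R : Type*} [Fintype n] [DecidableEq n] [CommRing R]
    {a k : Matrix n n R} (ha : IsUnit a) (hk : IsUnit k) : IsUnit (a * k * a⁻¹) :=
  (ha.mul hk).mul (isUnit_nonsing_inv_iff.mpr ha)

theorem mem_stab9_iff {a c : M2} (ha : IsUnit a) (hc : IsUnit c)
    (p : M2 × M2 × M2 × M2 × M2 × M2) :
    p ∈ stab9 a c ↔ IsUnit p.1 ∧ IsUnit p.2.2.1 ∧
      p.2.2.2.1 = (a * c) * p.1 * (a * c)⁻¹ ∧ p.2.1 = c * p.1 * c⁻¹ := by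
  obtain ⟨h4, k1, k2, h0, u, v⟩ := p
  simp only [stab9, Set.mem_ofPred_eq, mul_zero, zero_mul, and_true, true_and]
  have hconj : ∀ h : M2, a * (c * h * c⁻¹) * a⁻¹ = a * c * h * (a * c)⁻¹ := by
    intro h; simp only [Matrix.mul_inv_rev, Matrix.mul_assoc]
  constructor
  · rintro ⟨hh4, hk1, hk2, -, e1, e3⟩
    rw [mul_mul_nonsing_inv_eq_iff ha hk1] at e1
    rw [mul_mul_nonsing_inv_eq_iff hc hh4] at e3
    exact ⟨hh4, hk2, by rw [e1, e3, hconj], e3⟩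
  · rintro ⟨hh4, hk2, rfl, rfl⟩
    have hk1 := isUnit_conj hc hh4
    refine ⟨hh4, hk1, hk2, ?_, ?_, ?_⟩
    · rw [← hconj]; exact isUnit_conj ha hk1
    · rw [mul_mul_nonsing_inv_eq_iff ha hk1, hconj]
    · rw [mul_mul_nonsing_inv_eq_iff hc hh4]

def stab9Param (a c : M2) (q : M2 × M2 × M2 × M2) : M2 × M2 × M2 × M2 × M2 × M2 :=
  (q.1, c * q.1 * c⁻¹, q.2.1, (a * c) * q.1 * (a * c)⁻¹, q.2.2.1, q.2.2.2)

theorem stab9_eq_image {a c : M2} (ha : IsUnit a) (hc : IsUnit c) :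
    stab9 a c = stab9Param a c ''
      ({A | IsUnit A} ×ˢ {A | IsUnit A} ×ˢ Set.univ ×ˢ Set.univ) := by
  ext ⟨h4, k1, k2, h0, u, v⟩
  simp only [mem_stab9_iff ha hc, stab9Param, Set.mem_image, Set.mem_prod, Set.mem_ofPred_eq,
    Set.mem_univ, and_true, Prod.mk.injEq, Prod.exists]
  constructor
  · rintro ⟨hh4, hk2, rfl, rfl⟩
    exact ⟨h4, k2, u, v, ⟨hh4, hk2⟩, rfl, rfl, rfl, rfl, rfl, rfl⟩
  · rintro ⟨h4, k2, u, v, ⟨hh4, hk2⟩, rfl, rfl, rfl, rfl, rfl, rfl⟩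
    exact ⟨hh4, hk2, rfl, rfl⟩

theorem isConnected_stab9 {a c : M2} (ha : IsUnit a) (hc : IsUnit c) :
    IsConnected (stab9 a c) := by
  have hGL := (isPathConnected_setOf_isUnit (n := Fin 2)).isConnected
  rw [stab9_eq_image ha hc]
  exact (hGL.prod <| hGL.prod <| isConnected_univ.prod isConnected_univ).image _
    (by unfold stab9Param; fun_prop : Continuous (stab9Param a c)).continuousOn

def stab9Equiv {a c : M2} (ha : IsUnit a) (hc : IsUnit c) :
    stab9 a c ≃ M2ˣ × M2ˣ × M2 × M2 where
  toFun p := (((mem_stab9_iff ha hc _).mp p.2).1.unit,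
    ((mem_stab9_iff ha hc _).mp p.2).2.1.unit, p.1.2.2.2.2.1, p.1.2.2.2.2.2)
  invFun q := ⟨stab9Param a c (q.1, q.2.1, q.2.2),
    (mem_stab9_iff ha hc _).mpr ⟨q.1.isUnit, q.2.1.isUnit, rfl, rfl⟩⟩
  left_inv := by
    rintro ⟨⟨h4, k1, k2, h0, u, v⟩, hp⟩
    obtain ⟨-, -, rfl, rfl⟩ : IsUnit h4 ∧ IsUnit k2 ∧ h0 = a * c * h4 * (a * c)⁻¹ ∧
      k1 = c * h4 * c⁻¹ := (mem_stab9_iff ha hc _).mp hp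
    rfl
  right_inv := by
    rintro ⟨g, k, u, v⟩
    ext <;> rfl

theorem stmt_9 (a c : M2) (ha : IsUnit a) (hc : IsUnit c) :
    stab9 a c =
      {p : M2 × M2 × M2 × M2 × M2 × M2 | IsUnit p.1 ∧ IsUnit p.2.2.1 ∧
        p.2.2.2.1 = (a * c) * p.1 * (a * c)⁻¹ ∧ p.2.1 = c * p.1 * c⁻¹} ∧
    -- irreducible (in particular connected) of dimension 16:
    IsConnected (stab9 a c) ∧
    Nonempty (stab9 a c ≃ M2ˣ × M2ˣ × M2 × M2) :=
  ⟨Set.ext (mem_stab9_iff ha hc), isConnected_stab9 ha hc, ⟨stab9Equiv ha hc⟩⟩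
end
end

section
/- Let a, b, c, d ∈ GL2(ℂ) be such that g := (ac)⁻¹(bd) is regular semisimple (i.e. has two distinct eigenvalues). Then the stabilizer in Z_H(x_KS) of y_KS(a,b,c,d) consists of those (h4, k1, k2, h0, u, v) with h0 = (ac)h4(ac)⁻¹, k1 = c h4 c⁻¹, k2 = d h4 d⁻¹, h4 commuting with g, and u, v arbitrary; it has dimension exactly 10. -/
/-!
The stabilizer equations say k₁ = c h₄ c⁻¹, k₂ = d h₄ d⁻¹ and h₀ = a k₁ a⁻¹ = b k₂ b⁻¹, so a
stabilizing element is determined by h₄ and (u, v), subject only to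
(ac) h₄ (ac)⁻¹ = (bd) h₄ (bd)⁻¹, i.e. to h₄ commuting with g = (ac)⁻¹(bd). Eigenvectors for the
two distinct eigenvalues of g conjugate it to a diagonal matrix with distinct entries, and the
invertible matrices commuting with such a matrix are exactly the invertible diagonal ones,
a copy of ℂˣ × ℂˣ.
-/

open Matrix

noncomputable section

/-- The stabilizer of y_KS(a,b,c,d) inside Z_H(x_KS), in the parametrization
(h4, k1, k2, h0, u, v). -/
def stab10 (a b c d : M2) : Set (M2 × M2 × M2 × M2 × M2 × M2) :=
  {p | IsUnit p.1 ∧ IsUnit p.2.1 ∧ IsUnit p.2.2.1 ∧ IsUnit p.2.2.2.1 ∧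
    p.2.2.2.1 * a * p.2.1⁻¹ = a ∧ p.2.2.2.1 * b * p.2.2.1⁻¹ = b ∧
    p.2.1 * c * p.1⁻¹ = c ∧ p.2.2.1 * d * p.1⁻¹ = d}

section Monoid
variable {M N : Type*} [Monoid M] [Monoid N]

def unitCentralizer (a : M) : Set M := {x | IsUnit x ∧ Commute x a}

def MulEquiv.unitCentralizerEquiv (e : M ≃* N) (a : M) :
    unitCentralizer a ≃ unitCentralizer (e a) :=
  e.toEquiv.subtypeEquiv fun _ =>
    and_congr (MulEquiv.isUnit_map e).symm (commute_map_iff e.injective).symm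

end Monoid

namespace Matrix
variable {n K : Type*} [Fintype n] [DecidableEq n]

section CommRing
variable [CommRing K] {s t x y : Matrix n n K}

theorem mul_mul_inv_eq_self_iff (hs : IsUnit s) (hy : IsUnit y) :
    x * s * y⁻¹ = s ↔ x = s * y * s⁻¹ := by
  have := hs.invertible
  have := hy.invertible
  rw [mul_inv_eq_iff_eq_mul_of_invertible, eq_comm (a := x), mul_inv_eq_iff_eq_mul_of_invertible,
    eq_comm]

theorem conj_conj : s * (t * x * t⁻¹) * s⁻¹ = s * t * x * (s * t)⁻¹ := by
  simp only [mul_inv_rev, mul_assoc]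

theorem isUnit_conj_s10 (hs : IsUnit s) (hx : IsUnit x) : IsUnit (s * x * s⁻¹) :=
  (hs.mul hx).mul (isUnit_nonsing_inv_iff.2 hs)

theorem conj_eq_conj_iff_commute (hs : IsUnit s) (ht : IsUnit t) :
    s * x * s⁻¹ = t * x * t⁻¹ ↔ Commute x (s⁻¹ * t) := by
  have := hs.invertible
  have := ht.invertible
  rw [eq_comm, mul_inv_eq_iff_eq_mul_of_invertible, mul_assoc s, mul_assoc s,
    ← inv_mul_eq_iff_eq_mul_of_invertible, Commute, SemiconjBy]
  simp only [mul_assoc, eq_comm]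

end CommRing

section Field
variable [Field K]

theorem eq_diagonal_diag_of_commute_diagonal {μ : n → K} (hμ : Function.Injective μ)
    {x : Matrix n n K} (hx : Commute x (diagonal μ)) : x = diagonal x.diag := by
  ext i j
  by_cases hij : i = j
  · subst hij; simp
  · have hentry := congrFun (congrFun hx i) j
    rw [mul_diagonal, diagonal_mul] at hentry
    rw [diagonal_apply_ne _ hij]
    have hμji : μ j - μ i ≠ 0 := sub_ne_zero.2 fun h => hij (hμ h).symm
    have hprod : x i j * (μ j - μ i) = 0 := by linear_combination hentry
    exact (mul_eq_zero.1 hprod).resolve_right hμji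

noncomputable def unitCentralizerDiagonalEquiv {μ : n → K} (hμ : Function.Injective μ) :
    (n → Kˣ) ≃ unitCentralizer (diagonal μ) :=
  Equiv.ofBijective
    (fun v => ⟨diagonal fun i => (v i : K),
      isUnit_diagonal.2 (Pi.isUnit_iff.2 fun i => (v i).isUnit), commute_diagonal _ _⟩)
    ⟨fun v w hvw => funext fun i => Units.ext (congrFun (diagonal_injective
        (congrArg Subtype.val hvw)) i),
      fun ⟨x, hxu, hx⟩ => by
        have hxd := eq_diagonal_diag_of_commute_diagonal hμ hx
        have hdiag : ∀ i, IsUnit (x i i) := Pi.isUnit_iff.1 (isUnit_diagonal.1 (hxd ▸ hxu))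
        exact ⟨fun i => (hdiag i).unit, Subtype.ext hxd.symm⟩⟩

theorem exists_isUnit_mul_eq_mul_diagonal (A : Matrix n n K) {μ : n → K}
    (hμ : Function.Injective μ) (hroot : ∀ i, A.charpoly.IsRoot (μ i)) :
    ∃ s : Matrix n n K, IsUnit s ∧ A * s = s * diagonal μ := by
  have hev : ∀ i, ∃ v, Module.End.HasEigenvector (toLin' A) (μ i) v := fun i =>
    (Module.End.hasEigenvalue_iff_isRoot_charpoly _ _).2
      (by rw [charpoly_toLin']; exact hroot i) |>.exists_hasEigenvector
  choose v hv using hev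
  refine ⟨(of v)ᵀ, linearIndependent_cols_iff_isUnit.1 ?_, ?_⟩
  · exact Module.End.eigenvectors_linearIndependent' _ μ hμ v hv
  · ext j i
    have := congrFun (Module.End.mem_eigenspace_iff.1 (hv i).1) j
    simp only [toLin'_apply] at this
    rw [mul_diagonal]
    simpa [mul_apply, mulVec, dotProduct, mul_comm] using this

theorem nonempty_unitCentralizer_equiv_of_isRoot_charpoly (A : Matrix n n K) {μ : n → K}
    (hμ : Function.Injective μ) (hroot : ∀ i, A.charpoly.IsRoot (μ i)) :
    Nonempty (unitCentralizer A ≃ (n → Kˣ)) := by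
  obtain ⟨s, hs, hAs⟩ := exists_isUnit_mul_eq_mul_diagonal A hμ hroot
  have := hs.invertible
  let conj := MulDistribMulAction.toMulAut (ConjAct (Matrix n n K)ˣ) (Matrix n n K)
    (ConjAct.toConjAct hs.unit)
  have hA : A = conj (diagonal μ) := by
    change A = ConjAct.toConjAct hs.unit • diagonal μ
    rw [ConjAct.units_smul_def, ConjAct.ofConjAct_toConjAct,
      coe_units_inv, IsUnit.unit_spec, eq_comm, mul_inv_eq_iff_eq_mul_of_invertible, hAs]
  exact ⟨(Equiv.setCongr (congrArg unitCentralizer hA)).trans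
    ((conj.unitCentralizerEquiv _).symm.trans
      (unitCentralizerDiagonalEquiv hμ).symm)⟩

end Field
end Matrix

section Stabilizer
variable {a b c d : M2}

theorem stab10_eq (ha : IsUnit a) (hb : IsUnit b) (hc : IsUnit c) (hd : IsUnit d) :
    stab10 a b c d =
      {p : M2 × M2 × M2 × M2 × M2 × M2 | IsUnit p.1 ∧
        p.2.2.2.1 = (a * c) * p.1 * (a * c)⁻¹ ∧ p.2.1 = c * p.1 * c⁻¹ ∧
        p.2.2.1 = d * p.1 * d⁻¹ ∧ Commute p.1 ((a * c)⁻¹ * (b * d))} := by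
  ext ⟨h4, k1, k2, h0, u, v⟩
  simp only [stab10, Set.mem_ofPred_eq]
  constructor
  · rintro ⟨h4u, k1u, k2u, -, e1, e2, e3, e4⟩
    rw [mul_mul_inv_eq_self_iff hc h4u] at e3
    rw [mul_mul_inv_eq_self_iff hd h4u] at e4
    rw [mul_mul_inv_eq_self_iff ha k1u, e3, conj_conj] at e1
    rw [mul_mul_inv_eq_self_iff hb k2u, e4, conj_conj] at e2
    exact ⟨h4u, e1, e3, e4,
      (conj_eq_conj_iff_commute (ha.mul hc) (hb.mul hd)).1 (e1.symm.trans e2)⟩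
  · rintro ⟨h4u, rfl, rfl, rfl, hcomm⟩
    have k1u := isUnit_conj_s10 hc h4u
    have k2u := isUnit_conj_s10 hd h4u
    refine ⟨h4u, k1u, k2u, isUnit_conj_s10 (ha.mul hc) h4u, ?_, ?_, ?_, ?_⟩
    · rw [mul_mul_inv_eq_self_iff ha k1u, conj_conj]
    · rw [mul_mul_inv_eq_self_iff hb k2u, conj_conj]
      exact (conj_eq_conj_iff_commute (ha.mul hc) (hb.mul hd)).2 hcomm
    · exact (mul_mul_inv_eq_self_iff hc h4u).2 rfl
    · exact (mul_mul_inv_eq_self_iff hd h4u).2 rfl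

def stab10EquivUnitCentralizer (ha : IsUnit a) (hb : IsUnit b) (hc : IsUnit c)
    (hd : IsUnit d) : stab10 a b c d ≃ unitCentralizer ((a * c)⁻¹ * (b * d)) × M2 × M2 :=
  (Equiv.setCongr (stab10_eq ha hb hc hd)).trans
    { toFun := fun p => (⟨p.1.1, p.2.1, p.2.2.2.2.2⟩, p.1.2.2.2.2)
      invFun := fun q => ⟨(q.1, c * q.1 * c⁻¹, d * q.1 * d⁻¹, (a * c) * q.1 * (a * c)⁻¹, q.2),
        q.1.2.1, rfl, rfl, rfl, q.1.2.2⟩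
      left_inv := by
        rintro ⟨⟨h4, k1, k2, h0, u, v⟩, hp⟩
        obtain ⟨-, rfl, rfl, rfl, -⟩ : IsUnit h4 ∧ h0 = (a * c) * h4 * (a * c)⁻¹ ∧
          k1 = c * h4 * c⁻¹ ∧ k2 = d * h4 * d⁻¹ ∧ _ := hp
        rfl
      right_inv := fun _ => rfl }

end Stabilizer

theorem stmt_10 (a b c d : M2)
    (ha : IsUnit a) (hb : IsUnit b) (hc : IsUnit c) (hd : IsUnit d)
    (l1 l2 : ℂ) (hne : l1 ≠ l2)
    -- g := (ac)⁻¹(bd) is regular semisimple: two distinct eigenvalues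
    (hchar : ((a * c)⁻¹ * (b * d)).charpoly =
      (Polynomial.X - Polynomial.C l1) * (Polynomial.X - Polynomial.C l2)) :
    stab10 a b c d =
      {p : M2 × M2 × M2 × M2 × M2 × M2 | IsUnit p.1 ∧
        p.2.2.2.1 = (a * c) * p.1 * (a * c)⁻¹ ∧ p.2.1 = c * p.1 * c⁻¹ ∧
        p.2.2.1 = d * p.1 * d⁻¹ ∧
        p.1 * ((a * c)⁻¹ * (b * d)) = ((a * c)⁻¹ * (b * d)) * p.1} ∧
    -- dimension exactly 10 = 2 (centralizer of g) + 8 (u,v)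
    Nonempty (stab10 a b c d ≃ ℂˣ × ℂˣ × M2 × M2) := by
  obtain ⟨e⟩ := nonempty_unitCentralizer_equiv_of_isRoot_charpoly ((a * c)⁻¹ * (b * d))
    (μ := ![l1, l2]) (by intro i j h; fin_cases i <;> fin_cases j <;> simp_all [eq_comm])
    (by simp [Fin.forall_fin_two, hchar])
  exact ⟨stab10_eq ha hb hc hd, ⟨(stab10EquivUnitCentralizer ha hb hc hd).trans
    (((e.trans (piFinTwoEquiv fun _ => ℂˣ)).prodCongr (Equiv.refl _)).trans
      (Equiv.prodAssoc _ _ _))⟩⟩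
end
end

section
/- Let Λ be the 16-dimensional vector space of tuples y_KS(a,b,c,d) = ([0 a], [[a,b],[0,0]], [[0,c],[0,d]], [c;0]) with a,b,c,d ∈ Mat(2×2,ℂ), with the action of the 24-dimensional group Z_H(x_KS) given by (h4,k1,k2,h0,u,v)·y_KS(a,b,c,d) = y_KS(h0ak1⁻¹, h0bk2⁻¹, k1ch4⁻¹, k2dh4⁻¹). Then every Z_H(x_KS)-orbit in Λ has dimension at most 14. In particular Λ has no Zariski-open Z_H(x_KS)-orbit, i.e. (Λ, Z_H(x_KS)) is not a prehomogeneous vector space. -/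
/-
Orbit dimension. The tangent map of the action at y = (a, b, c, d) kills the scalar tuple
(1, 1, 1, 1), so it suffices to find one more kernel vector. If ac = 0 (or bd = 0), a common
null vector of a and c gives one. Otherwise any m commuting with adj(ac)·bd (a multiple of
(ac)⁻¹bd when ac is invertible) lifts to the kernel, and every 2×2 matrix has a
two-dimensional centraliser. If one of a, b, c, d vanishes, the image lies in a coordinate subspace of
dimension 12 instead.

No open orbit. The products det y₁ · det y₃ and det y₂ · det y₄ are relative invariants with
the same character det h₀ / det h₄. So each orbit lies in the zero set of a nonzero polynomial
(a combination of the two, or det y₂ · det y₄ alone when it vanishes at y), and that set has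
empty interior.
-/

open Matrix

noncomputable section

section

open Polynomial Topology

namespace Matrix

variable {n R : Type*} [Fintype n] [DecidableEq n]

theorem exists_mul_mul_ne_zero [Semiring R] [NoZeroDivisors R] {x z : Matrix n n R}
    (hx : x ≠ 0) (hz : z ≠ 0) : ∃ m, x * m * z ≠ 0 := by
  obtain ⟨i, j, hij⟩ : ∃ i j, x i j ≠ 0 := by simpa [← Matrix.ext_iff] using hx
  obtain ⟨k, l, hkl⟩ : ∃ k l, z k l ≠ 0 := by simpa [← Matrix.ext_iff] using hz
  refine ⟨single j k 1, fun h => mul_ne_zero hij hkl ?_⟩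
  have hil := congrFun (congrFun h i) l
  rwa [Matrix.mul_assoc, mul_apply, Finset.sum_eq_single j
    (fun r _ hr => by rw [single_mul_apply_of_ne _ _ _ _ _ hr, mul_zero]) (by simp),
    single_mul_apply_same, one_mul] at hil

theorem exists_commute_mul_ne_smul_one [CommRing R] [Nontrivial n] {k : Matrix n n R}
    (hk : k ≠ 0) : ∃ m, Commute m k ∧ ∀ t : R, k * m ≠ t • 1 := by
  by_cases hscalar : ∃ s : R, k = s • 1
  · obtain ⟨s, rfl⟩ := hscalar
    obtain ⟨i, j, hij⟩ := exists_pair_ne n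
    refine ⟨single i i 1, (Commute.one_right _).smul_right s, fun t h => hk ?_⟩
    have hii := congrFun (congrFun h i) i
    have hjj := congrFun (congrFun h j) j
    simp only [mul_single_apply_same, smul_apply, one_apply_eq, smul_eq_mul, mul_one, ne_eq,
      hij.symm, not_false_eq_true, mul_single_apply_of_ne] at hii hjj
    rw [hii, ← hjj, zero_smul]
  · push Not at hscalar
    exact ⟨1, Commute.one_left k, by simpa using hscalar⟩

theorem adjugate_fin_two_ne_zero [CommRing R] {a : Matrix (Fin 2) (Fin 2) R}
    (ha : a ≠ 0) : adjugate a ≠ 0 := by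
  intro h
  have := adjugate_adjugate a (by simp)
  rw [h, adjugate_zero, Fintype.card_fin, tsub_self, pow_zero, one_smul] at this
  exact ha this.symm

theorem det_eq_zero_of_mul_eq_zero [Field R] {a c : Matrix n n R} (hac : a * c = 0)
    (ha : a ≠ 0) (hc : c ≠ 0) : a.det = 0 ∧ c.det = 0 := by
  refine ⟨by_contra fun h => hc ?_, by_contra fun h => ha ?_⟩
  · exact ((isUnit_iff_isUnit_det a).mpr (isUnit_iff_ne_zero.mpr h)).mul_right_eq_zero.mp hac
  · exact ((isUnit_iff_isUnit_det c).mpr (isUnit_iff_ne_zero.mpr h)).mul_left_eq_zero.mp hac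

theorem exists_ne_zero_mul_eq_zero_and_mul_eq_zero [Field R] {a c : Matrix n n R}
    (ha : a.det = 0) (hc : c.det = 0) : ∃ q ≠ 0, a * q = 0 ∧ q * c = 0 := by
  obtain ⟨u, hu, hau⟩ := exists_mulVec_eq_zero_iff.mpr ha
  obtain ⟨v, hv, hvc⟩ := exists_vecMul_eq_zero_iff.mpr hc
  exact ⟨vecMulVec u v, by simp [hu, hv], by simp [mul_vecMulVec, hau],
    by simp [vecMulVec_mul, hvc]⟩

end Matrix

def IsPolynomialOnLines {R V : Type*} [CommRing R] [AddCommGroup V] [Module R V]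
    (f : V → R) : Prop :=
  ∀ x v : V, ∃ g : R[X], ∀ t : R, f (x + t • v) = g.eval t

namespace IsPolynomialOnLines

variable {R V : Type*} [CommRing R] [AddCommGroup V] [Module R V] {f g : V → R}

theorem const (r : R) : IsPolynomialOnLines fun _ : V => r :=
  fun _ _ => ⟨C r, fun _ => (eval_C).symm⟩

theorem mul (hf : IsPolynomialOnLines f) (hg : IsPolynomialOnLines g) :
    IsPolynomialOnLines fun x => f x * g x := fun x v => by
  obtain ⟨p, hp⟩ := hf x v
  obtain ⟨q, hq⟩ := hg x v
  exact ⟨p * q, fun t => by simp [hp, hq]⟩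

theorem sub (hf : IsPolynomialOnLines f) (hg : IsPolynomialOnLines g) :
    IsPolynomialOnLines fun x => f x - g x := fun x v => by
  obtain ⟨p, hp⟩ := hf x v
  obtain ⟨q, hq⟩ := hg x v
  exact ⟨p - q, fun t => by simp [hp, hq]⟩

theorem eq_zero_of_isOpen {𝕜 E : Type*} [NontriviallyNormedField 𝕜] [AddCommGroup E]
    [Module 𝕜 E] [TopologicalSpace E] [ContinuousAdd E] [ContinuousSMul 𝕜 E] {f : E → 𝕜}
    (hf : IsPolynomialOnLines f) {S : Set E} (hS : IsOpen S) {x : E} (hx : x ∈ S)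
    (hfS : ∀ y ∈ S, f y = 0) (z : E) : f z = 0 := by
  obtain ⟨p, hp⟩ := hf x (z - x)
  have hline : {t : 𝕜 | x + t • (z - x) ∈ S} ∈ 𝓝 (0 : 𝕜) :=
    (hS.preimage (by fun_prop)).mem_nhds (by simpa using hx)
  have hp0 : p = 0 := p.eq_zero_of_infinite_isRoot <|
    (infinite_of_mem_nhds _ hline).mono fun t ht => by simpa [← hp] using hfS _ ht
  simpa [hp0] using hp 1

end IsPolynomialOnLines

theorem Matrix.isPolynomialOnLines_det {n R : Type*} [Fintype n] [DecidableEq n] [CommRing R] :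
    IsPolynomialOnLines fun a : Matrix n n R => a.det := fun a b =>
  ⟨(a.map C + (X : R[X]) • b.map C).det, fun t => by
    rw [← coe_evalRingHom, RingHom.map_det]
    congr 1
    ext i j
    simp only [RingHom.mapMatrix_apply, map_apply, coe_evalRingHom, eval_add, eval_mul, eval_C,
      eval_X, add_apply, smul_apply, smul_eq_mul]⟩

theorem Submodule.two_le_finrank_of_notMem_span_singleton {K V : Type*} [DivisionRing K]
    [AddCommGroup V] [Module K V] {N : Submodule K V} [FiniteDimensional K N] {x y : V}
    (hx : x ∈ N) (hx0 : x ≠ 0) (hy : y ∈ N) (hyx : y ∉ K ∙ x) :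
    2 ≤ Module.finrank K N := by
  have hlt : K ∙ x < N :=
    lt_of_le_of_ne ((Submodule.span_singleton_le_iff_mem _ _).mpr hx) fun h => hyx (h ▸ hy)
  have := Submodule.finrank_lt_finrank_of_lt hlt
  rw [finrank_span_singleton hx0] at this
  omega

theorem LinearMap.finrank_range_add_finrank_le_of_comp_eq_zero {K V W U : Type*} [DivisionRing K]
    [AddCommGroup V] [Module K V] [AddCommGroup W] [Module K W] [AddCommGroup U] [Module K U]
    [FiniteDimensional K W] (L : V →ₗ[K] W) (φ : W →ₗ[K] U) (hφ : Function.Surjective φ)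
    (h : φ ∘ₗ L = 0) :
    Module.finrank K (LinearMap.range L) + Module.finrank K U ≤ Module.finrank K W := by
  have hle := Submodule.finrank_mono (LinearMap.range_le_ker_iff.mpr h)
  have hφ' := φ.finrank_range_add_finrank_ker
  rw [LinearMap.range_eq_top.mpr hφ, finrank_top] at hφ'
  omega

end

abbrev Quad := M2 × M2 × M2 × M2

-- the differential of the action at the identity; `w = (p, q, r, s)` is tangent to
-- `(h0, k1, k2, h4)`
def ksTangent (a b c d : M2) : Quad →ₗ[ℂ] Quad where
  toFun w := (w.1 * a - a * w.2.1, w.1 * b - b * w.2.2.1,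
    w.2.1 * c - c * w.2.2.2, w.2.2.1 * d - d * w.2.2.2)
  map_add' x y := by
    simp only [Prod.fst_add, Prod.snd_add, add_mul, mul_add, Prod.mk_add_mk]
    congr 1 <;> [abel; congr 1 <;> [abel; congr 1 <;> abel]]
  map_smul' t x := by simp [smul_sub]

def ksOrbit (a b c d : M2) : Set Quad :=
  {y | ∃ h4 k1 k2 h0 : M2, IsUnit h4 ∧ IsUnit k1 ∧ IsUnit k2 ∧ IsUnit h0 ∧
    y = (h0 * a * k1⁻¹, h0 * b * k2⁻¹, k1 * c * h4⁻¹, k2 * d * h4⁻¹)}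

theorem finrank_quad : Module.finrank ℂ Quad = 16 := by
  simp [Module.finrank_prod, Module.finrank_matrix]

section Tangent

variable {a b c d : M2}

theorem mem_ker_ksTangent {w : Quad} :
    w ∈ LinearMap.ker (ksTangent a b c d) ↔
      w.1 * a = a * w.2.1 ∧ w.1 * b = b * w.2.2.1 ∧
        w.2.1 * c = c * w.2.2.2 ∧ w.2.2.1 * d = d * w.2.2.2 := by
  simp [ksTangent, sub_eq_zero]

theorem one_mem_ker_ksTangent : 1 ∈ LinearMap.ker (ksTangent a b c d) := by
  rw [mem_ker_ksTangent]
  simp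

theorem quad_mem_span_one_iff {w : Quad} :
    w ∈ ℂ ∙ (1 : Quad) ↔ ∃ t : ℂ, w = (t • 1, t • 1, t • 1, t • 1) := by
  simp only [Submodule.mem_span_singleton, eq_comm (b := w)]
  rfl

theorem exists_mem_ker_ksTangent_of_a_mul_c_eq_zero (hac : a * c = 0) (ha : a ≠ 0)
    (hc : c ≠ 0) :
    ∃ w ∈ LinearMap.ker (ksTangent a b c d), w ∉ ℂ ∙ (1 : Quad) := by
  obtain ⟨hda, hdc⟩ := det_eq_zero_of_mul_eq_zero hac ha hc
  obtain ⟨q, hq, haq, hqc⟩ := exists_ne_zero_mul_eq_zero_and_mul_eq_zero hda hdc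
  refine ⟨(0, q, 0, 0), mem_ker_ksTangent.mpr (by simp [haq, hqc]), ?_⟩
  rw [quad_mem_span_one_iff]
  rintro ⟨t, ht⟩
  simp only [Prod.mk.injEq] at ht
  exact hq (ht.2.1.trans ht.1.symm)

theorem exists_mem_ker_ksTangent_of_b_mul_d_eq_zero (hbd : b * d = 0) (hb : b ≠ 0)
    (hd : d ≠ 0) :
    ∃ w ∈ LinearMap.ker (ksTangent a b c d), w ∉ ℂ ∙ (1 : Quad) := by
  obtain ⟨hdb, hdd⟩ := det_eq_zero_of_mul_eq_zero hbd hb hd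
  obtain ⟨r, hr, hbr, hrd⟩ := exists_ne_zero_mul_eq_zero_and_mul_eq_zero hdb hdd
  refine ⟨(0, 0, r, 0), mem_ker_ksTangent.mpr (by simp [hbr, hrd]), ?_⟩
  rw [quad_mem_span_one_iff]
  rintro ⟨t, ht⟩
  simp only [Prod.mk.injEq] at ht
  exact hr (ht.2.2.1.trans ht.1.symm)

/- For invertible `a` and `c` this is `det (a * c)` times the kernel vector with first entry
`b * d * m * (a * c)⁻¹`; the adjugates make it polynomial, so no invertibility is needed. -/
def liftCentralizer (a b c d m : M2) : Quad :=
  (b * d * m * adjugate (a * c), adjugate a * (b * d) * m * adjugate c,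
    d * m * adjugate (a * c) * b, adjugate (a * c) * (b * d) * m)

theorem liftCentralizer_mem_ker {m : M2} (hm : Commute m (adjugate (a * c) * (b * d))) :
    liftCentralizer a b c d m ∈ LinearMap.ker (ksTangent a b c d) := by
  rw [mem_ker_ksTangent]
  simp only [liftCentralizer]
  refine ⟨?_, by simp only [Matrix.mul_assoc], ?_, ?_⟩
  · simp only [adjugate_mul_distrib, Matrix.mul_assoc, adjugate_mul, Matrix.mul_smul,
      Matrix.mul_one]
    rw [← Matrix.mul_assoc a, mul_adjugate, Matrix.smul_mul, Matrix.one_mul]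
  · simp only [adjugate_mul_distrib, Matrix.mul_assoc, adjugate_mul, Matrix.mul_smul,
      Matrix.mul_one]
    rw [← Matrix.mul_assoc c, mul_adjugate, Matrix.smul_mul, Matrix.one_mul]
  · calc d * m * adjugate (a * c) * b * d = d * (m * (adjugate (a * c) * (b * d))) := by
          simp only [Matrix.mul_assoc]
      _ = d * (adjugate (a * c) * (b * d) * m) := by rw [hm.eq]

theorem exists_mem_ker_ksTangent_of_mul_ne_zero (hac : a * c ≠ 0) (hbd : b * d ≠ 0) :
    ∃ w ∈ LinearMap.ker (ksTangent a b c d), w ∉ ℂ ∙ (1 : Quad) := by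
  by_cases hk : adjugate (a * c) * (b * d) = 0
  · obtain ⟨m, hm⟩ := exists_mul_mul_ne_zero hbd (adjugate_fin_two_ne_zero hac)
    refine ⟨liftCentralizer a b c d m, liftCentralizer_mem_ker (by simp [hk]), ?_⟩
    rw [quad_mem_span_one_iff]
    rintro ⟨t, ht⟩
    simp only [liftCentralizer, hk, Matrix.zero_mul, Prod.mk.injEq] at ht
    exact hm (ht.1.trans ht.2.2.2.symm)
  · obtain ⟨m, hm, hkm⟩ := exists_commute_mul_ne_smul_one hk
    refine ⟨liftCentralizer a b c d m, liftCentralizer_mem_ker hm, ?_⟩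
    rw [quad_mem_span_one_iff]
    rintro ⟨t, ht⟩
    simp only [liftCentralizer, Prod.mk.injEq] at ht
    exact hkm t ht.2.2.2

theorem exists_mem_ker_ksTangent_notMem_span_one (ha : a ≠ 0) (hb : b ≠ 0) (hc : c ≠ 0)
    (hd : d ≠ 0) : ∃ w ∈ LinearMap.ker (ksTangent a b c d), w ∉ ℂ ∙ (1 : Quad) := by
  by_cases hac : a * c = 0
  · exact exists_mem_ker_ksTangent_of_a_mul_c_eq_zero hac ha hc
  by_cases hbd : b * d = 0
  · exact exists_mem_ker_ksTangent_of_b_mul_d_eq_zero hbd hb hd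
  exact exists_mem_ker_ksTangent_of_mul_ne_zero hac hbd

theorem finrank_range_ksTangent_le_of_eq_zero (h : a = 0 ∨ b = 0 ∨ c = 0 ∨ d = 0) :
    Module.finrank ℂ (LinearMap.range (ksTangent a b c d)) ≤ 12 := by
  suffices ∃ φ : Quad →ₗ[ℂ] M2, Function.Surjective φ ∧ φ ∘ₗ ksTangent a b c d = 0 by
    obtain ⟨φ, hφ, hL⟩ := this
    have := (ksTangent a b c d).finrank_range_add_finrank_le_of_comp_eq_zero φ hφ hL
    simp only [finrank_quad, Module.finrank_matrix, Fintype.card_fin, Module.finrank_self] at this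
    omega
  rcases h with rfl | rfl | rfl | rfl
  · exact ⟨LinearMap.fst ℂ M2 (M2 × M2 × M2), fun m => ⟨(m, 0, 0, 0), rfl⟩,
      LinearMap.ext fun w => by simp [ksTangent]⟩
  · exact ⟨LinearMap.fst ℂ M2 (M2 × M2) ∘ₗ LinearMap.snd ℂ M2 (M2 × M2 × M2),
      fun m => ⟨(0, m, 0, 0), rfl⟩, LinearMap.ext fun w => by simp [ksTangent]⟩
  · exact ⟨LinearMap.fst ℂ M2 M2 ∘ₗ LinearMap.snd ℂ M2 (M2 × M2) ∘ₗ
      LinearMap.snd ℂ M2 (M2 × M2 × M2), fun m => ⟨(0, 0, m, 0), rfl⟩,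
      LinearMap.ext fun w => by simp [ksTangent]⟩
  · exact ⟨LinearMap.snd ℂ M2 M2 ∘ₗ LinearMap.snd ℂ M2 (M2 × M2) ∘ₗ
      LinearMap.snd ℂ M2 (M2 × M2 × M2), fun m => ⟨(0, 0, 0, m), rfl⟩,
      LinearMap.ext fun w => by simp [ksTangent]⟩

end Tangent

theorem finrank_range_ksTangent_le (a b c d : M2) :
    Module.finrank ℂ (LinearMap.range (ksTangent a b c d)) ≤ 14 := by
  by_cases h : a = 0 ∨ b = 0 ∨ c = 0 ∨ d = 0
  · have := finrank_range_ksTangent_le_of_eq_zero h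
    omega
  push Not at h
  obtain ⟨w, hw, hw1⟩ := exists_mem_ker_ksTangent_notMem_span_one h.1 h.2.1 h.2.2.1 h.2.2.2
  have hker := Submodule.two_le_finrank_of_notMem_span_singleton one_mem_ker_ksTangent
    one_ne_zero hw hw1
  have := (ksTangent a b c d).finrank_range_add_finrank_ker
  rw [finrank_quad] at this
  omega

section Orbit

variable {a b c d : M2}

theorem mem_ksOrbit_self : (a, b, c, d) ∈ ksOrbit a b c d :=
  ⟨1, 1, 1, 1, isUnit_one, isUnit_one, isUnit_one, isUnit_one, by simp⟩

theorem exists_det_mul_det_eq_mul_of_mem_ksOrbit {y : Quad} (hy : y ∈ ksOrbit a b c d) :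
    ∃ χ : ℂ, y.1.det * y.2.2.1.det = χ * (a.det * c.det) ∧
      y.2.1.det * y.2.2.2.det = χ * (b.det * d.det) := by
  obtain ⟨h4, k1, k2, h0, -, hk1, hk2, -, rfl⟩ := hy
  have hk1' := det_nonsing_inv_mul_det k1 ((isUnit_iff_isUnit_det k1).mp hk1)
  have hk2' := det_nonsing_inv_mul_det k2 ((isUnit_iff_isUnit_det k2).mp hk2)
  refine ⟨h0.det * h4⁻¹.det, ?_, ?_⟩ <;> simp only [det_mul]
  · linear_combination (h0.det * a.det * c.det * h4⁻¹.det) * hk1'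
  · linear_combination (h0.det * b.det * d.det * h4⁻¹.det) * hk2'

theorem not_isOpen_ksOrbit : ¬ IsOpen (ksOrbit a b c d) := by
  intro hopen
  have hpoly₁ : IsPolynomialOnLines fun y : Quad => y.1.det :=
    fun x v => isPolynomialOnLines_det x.1 v.1
  have hpoly₂ : IsPolynomialOnLines fun y : Quad => y.2.1.det :=
    fun x v => isPolynomialOnLines_det x.2.1 v.2.1
  have hpoly₃ : IsPolynomialOnLines fun y : Quad => y.2.2.1.det :=
    fun x v => isPolynomialOnLines_det x.2.2.1 v.2.2.1
  have hpoly₄ : IsPolynomialOnLines fun y : Quad => y.2.2.2.det :=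
    fun x v => isPolynomialOnLines_det x.2.2.2 v.2.2.2
  have hpoly₁₃ := hpoly₁.mul hpoly₃
  have hpoly₂₄ := hpoly₂.mul hpoly₄
  by_cases hbd : b.det * d.det = 0
  · have := hpoly₂₄.eq_zero_of_isOpen hopen mem_ksOrbit_self (fun y hy => by
      obtain ⟨χ, -, h⟩ := exists_det_mul_det_eq_mul_of_mem_ksOrbit hy
      simpa [hbd] using h) 1
    simp at this
  · have := (((IsPolynomialOnLines.const (b.det * d.det)).mul hpoly₁₃).sub
      ((IsPolynomialOnLines.const (a.det * c.det)).mul hpoly₂₄)).eq_zero_of_isOpen hopen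
      mem_ksOrbit_self (fun y hy => by
        obtain ⟨χ, h₁₃, h₂₄⟩ := exists_det_mul_det_eq_mul_of_mem_ksOrbit hy
        rw [h₁₃, h₂₄]
        ring) (1, 1, 1, 0)
    exact hbd (by simpa using this)

end Orbit

theorem stmt_11 (a b c d : M2) :
    -- every Z_H(x_KS)-orbit in Λ has dimension ≤ 14: the rank of the
    -- infinitesimal action map at y_KS(a,b,c,d) is at most 14
    Module.finrank ℂ (Submodule.span ℂ (Set.range
      fun q : M2 × M2 × M2 × M2 =>
        ((q.1 * a - a * q.2.1, q.1 * b - b * q.2.2.1,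
          q.2.1 * c - c * q.2.2.2, q.2.2.1 * d - d * q.2.2.2) :
          M2 × M2 × M2 × M2))) ≤ 14 ∧
    -- in particular no orbit is open, i.e. Λ is not a prehomogeneous
    -- vector space for Z_H(x_KS)
    ¬ IsOpen {y : M2 × M2 × M2 × M2 |
      ∃ h4 k1 k2 h0 : M2, IsUnit h4 ∧ IsUnit k1 ∧ IsUnit k2 ∧ IsUnit h0 ∧
        y = (h0 * a * k1⁻¹, h0 * b * k2⁻¹, k1 * c * h4⁻¹, k2 * d * h4⁻¹)} := by
  refine ⟨?_, not_isOpen_ksOrbit⟩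
  have h := finrank_range_ksTangent_le a b c d
  rwa [← Submodule.span_eq (LinearMap.range _), LinearMap.coe_range] at h
end
end

section
/- Let a, b, c, d ∈ GL2(ℂ). Then there exists h ∈ Z_H(x_KS) such that h · y_KS(a,b,c,d) = y_KS(I, b', I, I) where b' = (ac)⁻¹(bd) (I the 2×2 identity). Explicitly, one may take h4 = I, k1 = c⁻¹, k2 = d⁻¹, h0 = (ac)⁻¹, u = v = 0. -/
open Matrix

noncomputable section

namespace Matrix

variable {n R : Type*} [Fintype n] [DecidableEq n] [CommRing R]

theorem nonsing_inv_mul_mul_inv_inv {A B : Matrix n n R} (hAB : IsUnit (A * B))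
    (hB : IsUnit B) : (A * B)⁻¹ * A * B⁻¹⁻¹ = 1 := by
  rw [nonsing_inv_nonsing_inv B ((isUnit_iff_isUnit_det B).mp hB), mul_assoc _ A,
    nonsing_inv_mul _ ((isUnit_iff_isUnit_det _).mp hAB)]

theorem mul_mul_nonsing_inv_inv (A B : Matrix n n R) {C : Matrix n n R} (hC : IsUnit C) :
    A * B * C⁻¹⁻¹ = A * (B * C) := by
  rw [nonsing_inv_nonsing_inv C ((isUnit_iff_isUnit_det C).mp hC), mul_assoc]

theorem nonsing_inv_mul_mul_inv_one {A : Matrix n n R} (hA : IsUnit A) :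
    A⁻¹ * A * (1 : Matrix n n R)⁻¹ = 1 := by
  rw [inv_one, mul_one, nonsing_inv_mul A ((isUnit_iff_isUnit_det A).mp hA)]

end Matrix

theorem stmt_12_general (a b c d : M2)
    (ha : IsUnit a) (hc : IsUnit c) (hd : IsUnit d) :
    -- there is h ∈ Z_H(x_KS) carrying y_KS(a,b,c,d) to y_KS(I,(ac)⁻¹(bd),I,I)
    (∃ h0 k1 k2 h4 : M2, IsUnit h0 ∧ IsUnit k1 ∧ IsUnit k2 ∧ IsUnit h4 ∧
      (y1m (h0 * a * k1⁻¹), y2m (h0 * a * k1⁻¹) (h0 * b * k2⁻¹),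
       y3m (k1 * c * h4⁻¹) (k2 * d * h4⁻¹), y4m (k1 * c * h4⁻¹)) =
      (y1m 1, y2m 1 ((a * c)⁻¹ * (b * d)), y3m 1 1, y4m 1)) ∧
    -- explicitly, h4 = I, k1 = c⁻¹, k2 = d⁻¹, h0 = (ac)⁻¹ works
    ((a * c)⁻¹ * a * (c⁻¹)⁻¹ = (1 : M2) ∧
     (a * c)⁻¹ * b * (d⁻¹)⁻¹ = (a * c)⁻¹ * (b * d) ∧
     c⁻¹ * c * (1 : M2)⁻¹ = 1 ∧
     d⁻¹ * d * (1 : M2)⁻¹ = 1) := by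
  have hac : (a * c)⁻¹ * a * (c⁻¹)⁻¹ = 1 := nonsing_inv_mul_mul_inv_inv (ha.mul hc) hc
  have hbd : (a * c)⁻¹ * b * (d⁻¹)⁻¹ = (a * c)⁻¹ * (b * d) := mul_mul_nonsing_inv_inv _ _ hd
  have hc' : c⁻¹ * c * (1 : M2)⁻¹ = 1 := nonsing_inv_mul_mul_inv_one hc
  have hd' : d⁻¹ * d * (1 : M2)⁻¹ = 1 := nonsing_inv_mul_mul_inv_one hd
  refine ⟨⟨(a * c)⁻¹, c⁻¹, d⁻¹, 1, isUnit_nonsing_inv_iff.mpr (ha.mul hc),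
    isUnit_nonsing_inv_iff.mpr hc, isUnit_nonsing_inv_iff.mpr hd, isUnit_one, ?_⟩,
    hac, hbd, hc', hd'⟩
  rw [hac, hbd, hc', hd']

theorem stmt_12 (a b c d : M2)
    (ha : IsUnit a) (hb : IsUnit b) (hc : IsUnit c) (hd : IsUnit d) :
    -- there is h ∈ Z_H(x_KS) carrying y_KS(a,b,c,d) to y_KS(I,(ac)⁻¹(bd),I,I)
    (∃ h0 k1 k2 h4 : M2, IsUnit h0 ∧ IsUnit k1 ∧ IsUnit k2 ∧ IsUnit h4 ∧
      (y1m (h0 * a * k1⁻¹), y2m (h0 * a * k1⁻¹) (h0 * b * k2⁻¹),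
       y3m (k1 * c * h4⁻¹) (k2 * d * h4⁻¹), y4m (k1 * c * h4⁻¹)) =
      (y1m 1, y2m 1 ((a * c)⁻¹ * (b * d)), y3m 1 1, y4m 1)) ∧
    -- explicitly, h4 = I, k1 = c⁻¹, k2 = d⁻¹, h0 = (ac)⁻¹ works
    ((a * c)⁻¹ * a * (c⁻¹)⁻¹ = (1 : M2) ∧
     (a * c)⁻¹ * b * (d⁻¹)⁻¹ = (a * c)⁻¹ * (b * d) ∧
     c⁻¹ * c * (1 : M2)⁻¹ = 1 ∧
     d⁻¹ * d * (1 : M2)⁻¹ = 1) :=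
  stmt_12_general a b c d ha hc hd
end
end

section
/- Let t1, t2 ∈ ℂ with t1 ≠ 0, t2 ≠ 0, and t1 ≠ t2. Then the system of equations in unknowns b1, b2, c3, f3 ∈ ℂ: (i) −b1 + f3 = 0, (ii) −c3 + f3 = 0, (iii) t1·b2 + b2·c3 + 1 = 0, (iv) t2·b2·c3 + b1 = 0, has exactly two solutions: (b1,b2,c3,f3) = (0, −1/t1, 0, 0) and (b1,b2,c3,f3) = (t2−t1, −1/t2, t2−t1, t2−t1). -/
/-!
The two linear equations force `f₃ = b₁ = c₃`, after which (iv) factors as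
`b₁ (t₂ b₂ + 1) = 0`. The branch `b₁ = 0` leaves `t₁ b₂ = -1`; in the branch `t₂ b₂ = -1`,
multiplying (iii) by `t₂` gives `b₁ = t₂ - t₁`.
-/

section System

variable {R : Type*} [CommRing R] [NoZeroDivisors R] {t1 t2 b1 b2 c3 f3 : R}

theorem solution_cases_of_system (h1 : -b1 + f3 = 0) (h2 : -c3 + f3 = 0)
    (h3 : t1 * b2 + b2 * c3 + 1 = 0) (h4 : t2 * b2 * c3 + b1 = 0) :
    (b1 = 0 ∧ t1 * b2 = -1 ∧ c3 = 0 ∧ f3 = 0) ∨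
      (b1 = t2 - t1 ∧ t2 * b2 = -1 ∧ c3 = t2 - t1 ∧ f3 = t2 - t1) := by
  have hf : f3 = b1 := by linear_combination h1
  have hc : c3 = b1 := by linear_combination h1 - h2
  have hfactor : b1 * (t2 * b2 + 1) = 0 := by linear_combination h4 - t2 * b2 * hc
  rcases mul_eq_zero.1 hfactor with hb1 | hb2
  · left
    exact ⟨hb1, by linear_combination h3 - b2 * hc - b2 * hb1, hc.trans hb1, hf.trans hb1⟩
  · right
    have hb1 : b1 = t2 - t1 := by
      linear_combination -t2 * h3 + (t1 + c3) * hb2 - hc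
    exact ⟨hb1, by linear_combination hb2, hc.trans hb1, hf.trans hb1⟩

theorem system_iff_solution_cases :
    (-b1 + f3 = 0 ∧ -c3 + f3 = 0 ∧ t1 * b2 + b2 * c3 + 1 = 0 ∧ t2 * b2 * c3 + b1 = 0) ↔
      (b1 = 0 ∧ t1 * b2 = -1 ∧ c3 = 0 ∧ f3 = 0) ∨
        (b1 = t2 - t1 ∧ t2 * b2 = -1 ∧ c3 = t2 - t1 ∧ f3 = t2 - t1) := by
  refine ⟨fun ⟨h1, h2, h3, h4⟩ => solution_cases_of_system h1 h2 h3 h4, ?_⟩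
  rintro (⟨rfl, hb2, rfl, rfl⟩ | ⟨rfl, hb2, rfl, rfl⟩)
  · exact ⟨by ring, by ring, by linear_combination hb2, by ring⟩
  · exact ⟨by ring, by ring, by linear_combination hb2, by linear_combination (t2 - t1) * hb2⟩

end System

theorem eq_neg_one_div_iff_mul_eq_neg_one {K : Type*} [Field K] {t b : K} (ht : t ≠ 0) :
    b = -1 / t ↔ t * b = -1 := by
  rw [eq_div_iff ht, mul_comm]

theorem stmt_14 (t1 t2 : ℂ) (ht1 : t1 ≠ 0) (ht2 : t2 ≠ 0) (hne : t1 ≠ t2) :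
    (∀ b1 b2 c3 f3 : ℂ,
      (-b1 + f3 = 0 ∧ -c3 + f3 = 0 ∧ t1 * b2 + b2 * c3 + 1 = 0 ∧
        t2 * b2 * c3 + b1 = 0) ↔
      ((b1, b2, c3, f3) = ((0 : ℂ), -1 / t1, (0 : ℂ), (0 : ℂ)) ∨
        (b1, b2, c3, f3) = (t2 - t1, -1 / t2, t2 - t1, t2 - t1))) ∧
    -- and these two solutions are distinct
    ((0 : ℂ), -1 / t1, (0 : ℂ), (0 : ℂ)) ≠
      (t2 - t1, -1 / t2, t2 - t1, t2 - t1) := by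
  refine ⟨fun b1 b2 c3 f3 => ?_, fun h => ?_⟩
  · simp only [Prod.mk.injEq, eq_neg_one_div_iff_mul_eq_neg_one ht1,
      eq_neg_one_div_iff_mul_eq_neg_one ht2]
    exact system_iff_solution_cases
  · simp only [Prod.mk.injEq] at h
    exact hne (sub_eq_zero.1 h.1.symm).symm
end

section
/- Define Arthur rectangles R(a,b) as in the previous item. Then the multisegment m_KS = { [−2,−1], [−2,−1], [−1,1], [−1,1], [0,0], [0,0], [1,2], [1,2] } is NOT a multiset union of Arthur rectangles: there is no finite multiset of pairs (a_i, b_i) of nonnegative integers with a_i + b_i even such that the multiset union of the R(a_i, b_i) equals m_KS. -/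
/-!
Every segment of `R(a, b)` has `a + 1` elements, so a rectangle containing `[-2, -1]` is some
`R(1, b)` with `b` odd, hence `b ≥ 1`. A rectangle with `b ≥ 1` contains a segment together with
its translate by one; but no segment of `m_KS` has its translate by one in `m_KS`.
-/

/-- The 'Arthur rectangle' R(a,b): the multiset of segments
[−(a+b)/2 + j, −(a+b)/2 + a + j] for j = 0, 1, …, b, each segment being the
set of consecutive integers Icc m n. -/
noncomputable def Rseg (a b : ℕ) : Multiset (Finset ℤ) :=
  (Multiset.range (b + 1)).map fun j =>
    Finset.Icc (-(((a : ℤ) + (b : ℤ)) / 2) + j) (-(((a : ℤ) + (b : ℤ)) / 2) + a + j)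

noncomputable def mKS : Multiset (Finset ℤ) :=
  {Finset.Icc (-2 : ℤ) (-1), Finset.Icc (-2 : ℤ) (-1),
    Finset.Icc (-1 : ℤ) 1, Finset.Icc (-1 : ℤ) 1,
    Finset.Icc (0 : ℤ) 0, Finset.Icc (0 : ℤ) 0,
    Finset.Icc (1 : ℤ) 2, Finset.Icc (1 : ℤ) 2}

theorem Finset.Icc_eq_Icc_iff {α : Type*} [PartialOrder α] [LocallyFiniteOrder α] {a b c d : α}
    (h : a ≤ b) : Finset.Icc a b = Finset.Icc c d ↔ a = c ∧ b = d := by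
  rw [← Finset.coe_inj, Finset.coe_Icc, Finset.coe_Icc, Set.Icc_eq_Icc_iff h]

open Finset

theorem mem_Rseg {a b : ℕ} {s : Finset ℤ} :
    s ∈ Rseg a b ↔ ∃ j ≤ b, s = Icc (-(((a : ℤ) + b) / 2) + j) (-(((a : ℤ) + b) / 2) + a + j) := by
  simp only [Rseg, Multiset.pure_def, Multiset.bind_def, Multiset.bind_singleton, Multiset.map_map,
    Function.comp_apply, Multiset.mem_map, Multiset.mem_range, Nat.lt_succ_iff, eq_comm]

theorem card_of_mem_Rseg {a b : ℕ} {s : Finset ℤ} (hs : s ∈ Rseg a b) : s.card = a + 1 := by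
  obtain ⟨j, -, rfl⟩ := mem_Rseg.mp hs
  rw [Int.card_Icc]
  omega

theorem exists_Icc_mem_Rseg_and_add_one {a b : ℕ} (hb : 1 ≤ b) :
    ∃ m : ℤ, Icc m (m + a) ∈ Rseg a b ∧ Icc (m + 1) (m + 1 + a) ∈ Rseg a b :=
  ⟨-(((a : ℤ) + b) / 2), mem_Rseg.mpr ⟨0, Nat.zero_le b, by push_cast; ring_nf⟩,
    mem_Rseg.mpr ⟨1, hb, by push_cast; ring_nf⟩⟩

theorem Icc_add_one_not_mem_mKS {m : ℤ} {a : ℕ} (h : Icc m (m + a) ∈ mKS) :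
    Icc (m + 1) (m + 1 + a) ∉ mKS := by
  have hle : ∀ k : ℤ, k ≤ k + a := fun k => by omega
  simp only [mKS, Multiset.insert_eq_cons, Multiset.mem_cons, Multiset.mem_singleton,
    Finset.Icc_eq_Icc_iff (hle _)] at h ⊢
  omega

theorem stmt_17 :
    ¬ ∃ L : Multiset (ℕ × ℕ),
      (∀ p ∈ L, Even (p.1 + p.2)) ∧
      (L.map fun p => Rseg p.1 p.2).sum =
        ({Finset.Icc (-2 : ℤ) (-1), Finset.Icc (-2 : ℤ) (-1),
          Finset.Icc (-1 : ℤ) 1, Finset.Icc (-1 : ℤ) 1,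
          Finset.Icc (0 : ℤ) 0, Finset.Icc (0 : ℤ) 0,
          Finset.Icc (1 : ℤ) 2, Finset.Icc (1 : ℤ) 2} : Multiset (Finset ℤ)) := by
  rintro ⟨L, hpar, hsum⟩
  change _ = mKS at hsum
  have hmem : Icc (-2 : ℤ) (-1) ∈ (L.map fun p => Rseg p.1 p.2).sum := by
    rw [hsum]; simp [mKS]
  obtain ⟨_, hR, hseg⟩ := Multiset.mem_join.mp hmem
  obtain ⟨⟨a, b⟩, hp, rfl⟩ := Multiset.mem_map.mp hR
  have ha : a = 1 := by
    have := card_of_mem_Rseg hseg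
    rw [Int.card_Icc] at this
    omega
  subst ha
  have hb : 1 ≤ b := by
    obtain ⟨r, hr⟩ := hpar _ hp
    omega
  have hle : Rseg 1 b ≤ mKS := hsum ▸ Multiset.le_sum_of_mem hR
  obtain ⟨m, h₀, h₁⟩ := exists_Icc_mem_Rseg_and_add_one hb
  exact Icc_add_one_not_mem_mKS (Multiset.mem_of_le hle h₀) (Multiset.mem_of_le hle h₁)
end

section
/- Let t1 ≠ t2 be nonzero complex numbers with t1·t2 ≠ 0 and set b = [[t1,1],[0,t2]]. Then the stabilizer in Z_H(x_KS) of y_KS(I, b, I, I) has dimension exactly 10, and hence the Z_H(x_KS)-orbit of y_KS(I, b, I, I) in the 16-dimensional space { y_KS(a,b,c,d) : a,b,c,d ∈ Mat(2×2,ℂ) } has dimension 24 − 10 = 14, i.e. codimension 2. -/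
open Matrix

noncomputable section

/-- The stabilizer of y_KS(I, [[t1,1],[0,t2]], I, I) inside Z_H(x_KS), in the
parametrization (h4, k1, k2, h0, u, v). -/
def stab19 (t1 t2 : ℂ) : Type :=
  {p : M2 × M2 × M2 × M2 × M2 × M2 //
    IsUnit p.1 ∧ IsUnit p.2.1 ∧ IsUnit p.2.2.1 ∧ IsUnit p.2.2.2.1 ∧
    p.2.2.2.1 * 1 * p.2.1⁻¹ = (1 : M2) ∧
    p.2.2.2.1 * !![t1, 1; 0, t2] * p.2.2.1⁻¹ = !![t1, 1; 0, t2] ∧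
    p.2.1 * 1 * p.1⁻¹ = (1 : M2) ∧ p.2.2.1 * 1 * p.1⁻¹ = (1 : M2)}

/-!
Both halves reduce to the centralizer of `b = !![t₁, 1; 0, t₂]`. The stabilizer equations
force `h₄ = k₁ = k₂ = h₀ =: g` with `g` an invertible matrix commuting with `b`, while `u, v`
are free; linearizing, the kernel of the infinitesimal action is `{(g, g, g, g)}` with `g`
commuting with `b`. Since `t₁ ≠ t₂`, a matrix commutes with `b` iff it is upper triangular with
off-diagonal entry `(g₁₁ - g₀₀) / (t₂ - t₁)`, so the centralizer is the plane parametrized by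
the diagonal, and such a matrix is invertible iff both diagonal entries are nonzero.
Rank–nullity then gives rank `16 - 2 = 14`.
-/

section OrbitTangent

variable {K A : Type*} [Field K] [Ring A] [Algebra K A]

/-- The differential at the identity of `(h₀, k₁, k₂, h₄) ↦ h · y_KS(a, b, c, d)`. -/
def orbitTangentMap (a b c d : A) : A × A × A × A →ₗ[K] A × A × A × A where
  toFun q := (q.1 * a - a * q.2.1, q.1 * b - b * q.2.2.1,
    q.2.1 * c - c * q.2.2.2, q.2.2.1 * d - d * q.2.2.2)
  map_add' p q := by
    simp only [Prod.fst_add, Prod.snd_add, add_mul, mul_add, Prod.mk_add_mk]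
    refine Prod.ext ?_ (Prod.ext ?_ (Prod.ext ?_ ?_)) <;> dsimp only <;> abel
  map_smul' r q := by
    simp only [Prod.smul_fst, Prod.smul_snd, smul_mul_assoc, mul_smul_comm, smul_sub,
      RingHom.id_apply, Prod.smul_mk]

variable (K A) in
def fourfoldDiagonal : A →ₗ[K] A × A × A × A :=
  LinearMap.id.prod (LinearMap.id.prod (LinearMap.id.prod LinearMap.id))

theorem fourfoldDiagonal_injective : Function.Injective (fourfoldDiagonal K A) :=
  fun _ _ h => congrArg Prod.fst h

theorem ker_orbitTangentMap (b : A) :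
    LinearMap.ker (orbitTangentMap (K := K) 1 b 1 1) =
      (Subalgebra.centralizer K {b}).toSubmodule.map (fourfoldDiagonal K A) := by
  ext ⟨q₁, q₂, q₃, q₄⟩
  simp only [LinearMap.mem_ker, Submodule.mem_map, Subalgebra.mem_toSubmodule,
    Subalgebra.mem_centralizer_iff, Set.mem_singleton_iff, forall_eq]
  constructor
  · intro h
    simp only [orbitTangentMap, LinearMap.coe_mk, AddHom.coe_mk, mul_one, one_mul,
      Prod.mk_eq_zero, sub_eq_zero] at h
    obtain ⟨rfl, hb, rfl, rfl⟩ := h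
    exact ⟨_, hb.symm, rfl⟩
  · rintro ⟨g, hg, h⟩
    simp only [fourfoldDiagonal, LinearMap.prod_apply] at h
    obtain ⟨rfl, rfl, rfl, rfl⟩ := h
    simp [orbitTangentMap, hg]

theorem finrank_range_orbitTangentMap_add_finrank_centralizer [FiniteDimensional K A] (b : A) :
    Module.finrank K (LinearMap.range (orbitTangentMap (K := K) 1 b 1 1)) +
      Module.finrank K (Subalgebra.centralizer K {b}) = 4 * Module.finrank K A := by
  rw [← Subalgebra.finrank_toSubmodule, (Submodule.equivMapOfInjective _
      fourfoldDiagonal_injective (Subalgebra.centralizer K {b}).toSubmodule).finrank_eq,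
    ← ker_orbitTangentMap, LinearMap.finrank_range_add_finrank_ker]
  simp only [Module.finrank_prod]
  ring

end OrbitTangent

section Centralizer

variable {K : Type*} [Field K] {t₁ t₂ : K}

def centralizerParam (t₁ t₂ : K) : K × K →ₗ[K] Matrix (Fin 2) (Fin 2) K where
  toFun z := !![z.1, (z.2 - z.1) / (t₂ - t₁); 0, z.2]
  map_add' z w := by
    ext i j
    fin_cases i <;> fin_cases j <;> simp
    ring
  map_smul' r z := by
    ext i j
    fin_cases i <;> fin_cases j <;> simp
    ring

@[simp]
theorem centralizerParam_apply_zero_zero (z : K × K) : centralizerParam t₁ t₂ z 0 0 = z.1 :=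
  rfl

@[simp]
theorem centralizerParam_apply_one_one (z : K × K) : centralizerParam t₁ t₂ z 1 1 = z.2 :=
  rfl

theorem centralizerParam_injective : Function.Injective (centralizerParam (K := K) t₁ t₂) :=
  fun _ _ h => Prod.ext (congrFun (congrFun h 0) 0) (congrFun (congrFun h 1) 1)

theorem det_centralizerParam (z : K × K) : (centralizerParam t₁ t₂ z).det = z.1 * z.2 := by
  simp [centralizerParam, Matrix.det_fin_two_of]

theorem isUnit_centralizerParam_iff {z : K × K} :
    IsUnit (centralizerParam t₁ t₂ z) ↔ z.1 ≠ 0 ∧ z.2 ≠ 0 := by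
  rw [Matrix.isUnit_iff_isUnit_det, det_centralizerParam, isUnit_iff_ne_zero, mul_ne_zero_iff]

theorem mem_centralizer_iff_entries {g : Matrix (Fin 2) (Fin 2) K} :
    g ∈ Subalgebra.centralizer K {!![t₁, 1; 0, t₂]} ↔
      g 1 0 = 0 ∧ g 0 1 * (t₂ - t₁) = g 1 1 - g 0 0 := by
  simp only [Subalgebra.mem_centralizer_iff, Set.mem_singleton_iff, forall_eq]
  rw [← Matrix.ext_iff]
  simp only [Fin.forall_fin_two, Matrix.mul_apply, Fin.sum_univ_two, Matrix.of_apply,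
    Matrix.cons_val', Matrix.cons_val_zero, Matrix.cons_val_one, Matrix.empty_val',
    Matrix.cons_val_fin_one]
  constructor
  · rintro ⟨⟨h₀₀, h₀₁⟩, -, -⟩
    exact ⟨by linear_combination h₀₀, by linear_combination -h₀₁⟩
  · rintro ⟨h₁₀, h₀₁⟩
    simp only [h₁₀]
    exact ⟨⟨by ring, by linear_combination -h₀₁⟩, by ring, by ring⟩

theorem mem_centralizer_iff_eq_centralizerParam (hne : t₁ ≠ t₂) {g : Matrix (Fin 2) (Fin 2) K} :
    g ∈ Subalgebra.centralizer K {!![t₁, 1; 0, t₂]} ↔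
      g = centralizerParam t₁ t₂ (g 0 0, g 1 1) := by
  have ht : t₂ - t₁ ≠ 0 := sub_ne_zero.mpr hne.symm
  rw [mem_centralizer_iff_entries, ← Matrix.ext_iff]
  simp [centralizerParam, Fin.forall_fin_two, eq_div_iff ht, and_comm]

theorem centralizerParam_mem_centralizer (hne : t₁ ≠ t₂) (z : K × K) :
    centralizerParam t₁ t₂ z ∈ Subalgebra.centralizer K {!![t₁, 1; 0, t₂]} :=
  (mem_centralizer_iff_eq_centralizerParam hne).mpr (by simp)

theorem range_centralizerParam (hne : t₁ ≠ t₂) :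
    LinearMap.range (centralizerParam t₁ t₂) =
      (Subalgebra.centralizer K {!![t₁, 1; 0, t₂]}).toSubmodule := by
  ext g
  constructor
  · rintro ⟨z, rfl⟩
    exact centralizerParam_mem_centralizer hne z
  · exact fun hg => ⟨_, ((mem_centralizer_iff_eq_centralizerParam hne).mp hg).symm⟩

theorem finrank_centralizer (hne : t₁ ≠ t₂) :
    Module.finrank K (Subalgebra.centralizer K {!![t₁, 1; 0, t₂]}) = 2 := by
  rw [← Subalgebra.finrank_toSubmodule, ← range_centralizerParam hne,
    LinearMap.finrank_range_of_inj centralizerParam_injective]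
  simp

theorem diag_ne_zero_of_isUnit_of_mem_centralizer (hne : t₁ ≠ t₂)
    {g : Matrix (Fin 2) (Fin 2) K} (hg : IsUnit g)
    (hc : g ∈ Subalgebra.centralizer K {!![t₁, 1; 0, t₂]}) : g 0 0 ≠ 0 ∧ g 1 1 ≠ 0 := by
  rw [mem_centralizer_iff_eq_centralizerParam hne] at hc
  rwa [hc, isUnit_centralizerParam_iff] at hg

def centralizerUnitsEquiv (hne : t₁ ≠ t₂) :
    {g : Matrix (Fin 2) (Fin 2) K // IsUnit g ∧ g ∈ Subalgebra.centralizer K {!![t₁, 1; 0, t₂]}} ≃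
      Kˣ × Kˣ where
  toFun g :=
    (Units.mk0 _ (diag_ne_zero_of_isUnit_of_mem_centralizer hne g.2.1 g.2.2).1,
      Units.mk0 _ (diag_ne_zero_of_isUnit_of_mem_centralizer hne g.2.1 g.2.2).2)
  invFun z := ⟨centralizerParam t₁ t₂ (z.1, z.2),
    isUnit_centralizerParam_iff.mpr ⟨z.1.ne_zero, z.2.ne_zero⟩,
    centralizerParam_mem_centralizer hne _⟩
  left_inv g := Subtype.ext ((mem_centralizer_iff_eq_centralizerParam hne).mp g.2.2).symm
  right_inv _ := Prod.ext (Units.ext rfl) (Units.ext rfl)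

end Centralizer

theorem Matrix.mul_inv_eq_iff_eq_mul_of_isUnit {m n α : Type*} [Fintype n] [DecidableEq n]
    [CommRing α] {A : Matrix n n α} {B C : Matrix m n α} (hA : IsUnit A) :
    B * A⁻¹ = C ↔ B = C * A :=
  letI := hA.invertible
  mul_inv_eq_iff_eq_mul_of_invertible A B C

def stab19EquivCentralizerUnits (t1 t2 : ℂ) :
    stab19 t1 t2 ≃
      {g : M2 // IsUnit g ∧ g ∈ Subalgebra.centralizer ℂ {!![t1, 1; 0, t2]}} × M2 × M2 :=
  Equiv.symm <| Equiv.ofBijective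
    (fun g => ⟨(g.1, g.1, g.1, g.1, g.2.1, g.2.2), by
      obtain ⟨⟨g, hu, hc⟩, u, v⟩ := g
      simp only [Subalgebra.mem_centralizer_iff, Set.mem_singleton_iff, forall_eq] at hc
      have hself : g * 1 * g⁻¹ = 1 := by
        rw [Matrix.mul_inv_eq_iff_eq_mul_of_isUnit hu, Matrix.mul_one, Matrix.one_mul]
      exact ⟨hu, hu, hu, hu, hself, (Matrix.mul_inv_eq_iff_eq_mul_of_isUnit hu).mpr hc.symm,
        hself, hself⟩⟩)
    ⟨fun g g' h => by
      have h' := congrArg Subtype.val h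
      simp only [Prod.mk.injEq] at h'
      exact Prod.ext (Subtype.ext h'.1) (Prod.ext h'.2.2.2.2.1 h'.2.2.2.2.2), by
      rintro ⟨⟨h₄, k₁, k₂, h₀, u, v⟩, hp⟩
      obtain ⟨hu₄, hu₁, hu₂, hu₀, e₁, e₂, e₃, e₄⟩ := id hp
      simp only [Matrix.mul_one, Matrix.one_mul, Matrix.mul_inv_eq_iff_eq_mul_of_isUnit hu₁,
        Matrix.mul_inv_eq_iff_eq_mul_of_isUnit hu₂, Matrix.mul_inv_eq_iff_eq_mul_of_isUnit hu₄]
        at e₁ e₂ e₃ e₄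
      subst e₃ e₄ e₁
      refine ⟨⟨⟨h₀, hu₀, ?_⟩, u, v⟩, rfl⟩
      simpa only [Subalgebra.mem_centralizer_iff, Set.mem_singleton_iff, forall_eq] using e₂.symm⟩

theorem stmt_19_general (t1 t2 : ℂ) (hne : t1 ≠ t2) :
    -- the stabilizer has dimension exactly 10
    Nonempty (stab19 t1 t2 ≃ ℂˣ × ℂˣ × M2 × M2) ∧
    -- hence the orbit has dimension 24 − 10 = 14, i.e. codimension 2 in the
    -- 16-dimensional space: the infinitesimal action map has rank 14
    Module.finrank ℂ (Submodule.span ℂ (Set.range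
      fun q : M2 × M2 × M2 × M2 =>
        ((q.1 * 1 - 1 * q.2.1, q.1 * !![t1, 1; 0, t2] - !![t1, 1; 0, t2] * q.2.2.1,
          q.2.1 * 1 - 1 * q.2.2.2, q.2.2.1 * 1 - 1 * q.2.2.2) :
          M2 × M2 × M2 × M2))) = 14 := by
  refine ⟨⟨(stab19EquivCentralizerUnits t1 t2).trans
    (((centralizerUnitsEquiv hne).prodCongr (Equiv.refl _)).trans (Equiv.prodAssoc _ _ _))⟩, ?_⟩
  have hrank := finrank_range_orbitTangentMap_add_finrank_centralizer (K := ℂ) (A := M2) !![t1, 1; 0, t2]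
  rw [finrank_centralizer hne, Module.finrank_matrix, Fintype.card_fin, Module.finrank_self]
    at hrank
  change Module.finrank ℂ (Submodule.span ℂ (Set.range (orbitTangentMap (K := ℂ) 1 _ 1 1))) = 14
  rw [← LinearMap.coe_range, Submodule.span_eq]
  omega

theorem stmt_19 (t1 t2 : ℂ) (hne : t1 ≠ t2) (ht1 : t1 ≠ 0) (ht2 : t2 ≠ 0) :
    -- the stabilizer has dimension exactly 10
    Nonempty (stab19 t1 t2 ≃ ℂˣ × ℂˣ × M2 × M2) ∧
    -- hence the orbit has dimension 24 − 10 = 14, i.e. codimension 2 in the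
    -- 16-dimensional space: the infinitesimal action map has rank 14
    Module.finrank ℂ (Submodule.span ℂ (Set.range
      fun q : M2 × M2 × M2 × M2 =>
        ((q.1 * 1 - 1 * q.2.1, q.1 * !![t1, 1; 0, t2] - !![t1, 1; 0, t2] * q.2.2.1,
          q.2.1 * 1 - 1 * q.2.2.2, q.2.2.1 * 1 - 1 * q.2.2.2) :
          M2 × M2 × M2 × M2))) = 14 :=
  stmt_19_general t1 t2 hne
end
end
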